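/- arXiv:2502.19036 — 10 statements merged into one kernel-verified Lean document; each statement's English description precedes it below -/
import Mathlib

section
/- Let v₁,…,v_s ∈ ℝⁿ be vectors whose ℤ-span Λ is a nonzero lattice, let λ = √(λ₁(Λ)), let t ∈ ℤ_{≥1}, and for each i let w_i be a t-approximation of v_i. Equip ℤ^s with the quadratic form q(x) = ‖x‖² + ‖Σ_i x_i w_i‖²·t². Let ω ∈ ℤ_{≥1} be such that t ≥ (ns+1)·√ω/λ. Then every x ∈ ℤ^s with q(x) ≤ ω satisfies Σ_i x_i v_i = 0. -/
/-!
If `u = Σ xᵢ vᵢ` were nonzero it would be a nonzero lattice vector, so `λ ≤ ‖u‖`. On the other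
hand `t‖u‖ ≤ t‖Σ xᵢ wᵢ‖ + Σ |xᵢ| · t‖vᵢ - wᵢ‖`; the first term is `< √ω` because `q(x) ≤ ω` and
`‖x‖² ≥ 1`, and each `|xᵢ| ≤ √ω` and `t‖vᵢ - wᵢ‖ ≤ √n ≤ n`, so `t‖u‖ < (ns + 1)√ω ≤ tλ`.
-/

lemma EuclideanSpace.norm_le_sqrt_card_mul {ι : Type*} [Fintype ι] (y : EuclideanSpace ℝ ι)
    {c : ℝ} (hc : 0 ≤ c) (h : ∀ j, |y j| ≤ c) : ‖y‖ ≤ √(Fintype.card ι) * c := by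
  rw [EuclideanSpace.norm_eq, ← Real.sqrt_sq hc, ← Real.sqrt_mul (Nat.cast_nonneg _)]
  gcongr
  calc ∑ j, ‖y j‖ ^ 2 ≤ ∑ _j : ι, c ^ 2 :=
        Finset.sum_le_sum fun j _ => pow_le_pow_left₀ (norm_nonneg _) (h j) 2
    _ = Fintype.card ι * c ^ 2 := by simp

lemma mul_norm_sub_le_sqrt_of_abs_sub_le {n : ℕ} {v w : EuclideanSpace ℝ (Fin n)} {t : ℝ}
    (ht : 0 ≤ t) (h : ∀ j, |v j - w j| ≤ 1 / t) : t * ‖v - w‖ ≤ √n := by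
  have hcoord : ∀ j, |(t • (v - w)) j| ≤ 1 := fun j => by
    calc |(t • (v - w)) j| = t * |v j - w j| := by simp [abs_mul, abs_of_nonneg ht]
      _ ≤ t * (1 / t) := mul_le_mul_of_nonneg_left (h j) ht
      _ ≤ 1 := by rw [mul_one_div]; exact div_self_le_one t
  simpa [norm_smul, abs_of_nonneg ht] using
    EuclideanSpace.norm_le_sqrt_card_mul _ zero_le_one hcoord

lemma Real.sqrt_natCast_le_self (n : ℕ) : √(n : ℝ) ≤ n := by
  rcases n.eq_zero_or_pos with rfl | hn
  · simp
  · exact Real.sqrt_le_self_iff.mpr (Or.inr (by exact_mod_cast hn))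

lemma one_le_sum_sq_intCast {ι : Type*} [Fintype ι] {x : ι → ℤ} (hx : x ≠ 0) :
    1 ≤ ∑ i, (x i : ℝ) ^ 2 := by
  obtain ⟨i, hi⟩ := Function.ne_iff.mp hx
  have hi' : (1 : ℝ) ≤ (x i : ℝ) ^ 2 := by
    rw [one_le_sq_iff_one_le_abs, ← Int.cast_abs]; exact_mod_cast Int.one_le_abs hi
  exact hi'.trans (Finset.single_le_sum (fun j _ => sq_nonneg (x j : ℝ)) (Finset.mem_univ i))

lemma mul_norm_sum_smul_lt {n s : ℕ} (v w : Fin s → EuclideanSpace ℝ (Fin n)) {t : ℝ}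
    (ht : 0 ≤ t) (happrox : ∀ i j, |v i j - w i j| ≤ 1 / t) {x : Fin s → ℤ} (hx0 : x ≠ 0)
    {ω : ℝ} (hx : (∑ i, (x i : ℝ) ^ 2) + ‖∑ i, (x i : ℝ) • w i‖ ^ 2 * t ^ 2 ≤ ω) :
    t * ‖∑ i, (x i : ℝ) • v i‖ < (n * s + 1) * √ω := by
  have hsq := one_le_sum_sq_intCast hx0
  have hxi : ∀ i, |(x i : ℝ)| ≤ √ω := fun i => Real.abs_le_sqrt <| by
    have := Finset.single_le_sum (fun j _ => sq_nonneg (x j : ℝ)) (Finset.mem_univ i)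
    nlinarith [sq_nonneg (‖∑ i, (x i : ℝ) • w i‖ * t)]
  have happ : t * ‖∑ i, (x i : ℝ) • w i‖ < √ω := by
    rw [Real.lt_sqrt (by positivity)]
    nlinarith
  have herr : t * ‖∑ i, (x i : ℝ) • (v i - w i)‖ ≤ n * s * √ω := by
    calc t * ‖∑ i, (x i : ℝ) • (v i - w i)‖ ≤ t * ∑ i, ‖(x i : ℝ) • (v i - w i)‖ :=
          mul_le_mul_of_nonneg_left (norm_sum_le _ _) ht
      _ = ∑ i, |(x i : ℝ)| * (t * ‖v i - w i‖) := by
          rw [Finset.mul_sum]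
          exact Finset.sum_congr rfl fun i _ => by rw [norm_smul, Real.norm_eq_abs]; ring
      _ ≤ ∑ _i : Fin s, √ω * n := by
          gcongr with i
          · exact hxi i
          · exact (mul_norm_sub_le_sqrt_of_abs_sub_le ht (happrox i)).trans
              (Real.sqrt_natCast_le_self n)
      _ = n * s * √ω := by
          simp only [Finset.sum_const, Finset.card_univ, Fintype.card_fin, nsmul_eq_mul]; ring
  have hsplit : ∑ i, (x i : ℝ) • v i
      = ∑ i, (x i : ℝ) • w i + ∑ i, (x i : ℝ) • (v i - w i) := by
    simp only [smul_sub, Finset.sum_sub_distrib, add_sub_cancel]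
  calc t * ‖∑ i, (x i : ℝ) • v i‖
      ≤ t * ‖∑ i, (x i : ℝ) • w i‖ + t * ‖∑ i, (x i : ℝ) • (v i - w i)‖ := by
        rw [hsplit, ← mul_add]; exact mul_le_mul_of_nonneg_left (norm_add_le _ _) ht
    _ < √ω + n * s * √ω := by linarith
    _ = (n * s + 1) * √ω := by ring

section MinSqNorm

variable {E : Type*} [SeminormedAddCommGroup E]

/-- The first successive minimum `λ₁(L)`. -/
noncomputable def minSqNorm (L : Set E) : ℝ := sInf {r : ℝ | ∃ x ∈ L, x ≠ 0 ∧ r = ‖x‖ ^ 2}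

lemma minSqNorm_le {L : Set E} {u : E} (hu : u ∈ L) (hu0 : u ≠ 0) : minSqNorm L ≤ ‖u‖ ^ 2 :=
  csInf_le ⟨0, by rintro r ⟨y, -, -, rfl⟩; positivity⟩ ⟨u, hu, hu0, rfl⟩

lemma minSqNorm_pos {L : Set E} {u : E} (hu : u ∈ L) (hu0 : u ≠ 0)
    (hdisc : ∃ ε : ℝ, 0 < ε ∧ ∀ x ∈ L, x ≠ 0 → ε ≤ ‖x‖ ^ 2) : 0 < minSqNorm L := by
  obtain ⟨ε, hε, hεL⟩ := hdisc
  refine hε.trans_le (le_csInf ⟨_, u, hu, hu0, rfl⟩ ?_)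
  rintro r ⟨y, hy, hy0, rfl⟩
  exact hεL y hy hy0

end MinSqNorm

theorem stmt_2_general (n s : ℕ) (v w : Fin s → EuclideanSpace ℝ (Fin n))
    (hdisc : ∃ ε : ℝ, 0 < ε ∧
      ∀ x ∈ Submodule.span ℤ (Set.range v), x ≠ 0 → ε ≤ ‖x‖ ^ 2)
    (lam : ℝ) (hlam : lam = Real.sqrt
      (sInf {r : ℝ | ∃ x ∈ Submodule.span ℤ (Set.range v), x ≠ 0 ∧ r = ‖x‖ ^ 2}))
    (t : ℕ)
    (happrox : ∀ i : Fin s, ∀ j : Fin n,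
      (∃ m : ℤ, w i j = (m : ℝ) / t) ∧ |v i j - w i j| ≤ 1 / t)
    (ω : ℕ)
    (htω : ((n * s + 1 : ℕ) : ℝ) * Real.sqrt ω / lam ≤ t)
    (x : Fin s → ℤ)
    (hx : (∑ i : Fin s, (x i : ℝ) ^ 2) +
      ‖∑ i : Fin s, (x i : ℝ) • w i‖ ^ 2 * (t : ℝ) ^ 2 ≤ ω) :
    ∑ i : Fin s, (x i : ℝ) • v i = 0 := by
  by_contra hu0
  have hu : ∑ i, (x i : ℝ) • v i ∈ Submodule.span ℤ (Set.range v) :=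
    Submodule.sum_mem _ fun i _ => by
      rw [Int.cast_smul_eq_zsmul]; exact Submodule.smul_mem _ _ (Submodule.subset_span ⟨i, rfl⟩)
  have hx0 : x ≠ 0 := by rintro rfl; simp at hu0
  have hlam_pos : 0 < lam := hlam ▸ Real.sqrt_pos.mpr (minSqNorm_pos hu hu0 hdisc)
  have hlam_le : lam ≤ ‖∑ i, (x i : ℝ) • v i‖ :=
    hlam ▸ Real.sqrt_le_left (norm_nonneg _) |>.mpr (minSqNorm_le hu hu0)
  have hlt := mul_norm_sum_smul_lt v w (Nat.cast_nonneg t) (fun i j => (happrox i j).2) hx0 hx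
  have hbound : ((n * s + 1 : ℕ) : ℝ) * √ω ≤ t * lam := (div_le_iff₀ hlam_pos).mp htω
  push_cast at hbound
  linarith [mul_le_mul_of_nonneg_left hlam_le (Nat.cast_nonneg (α := ℝ) t)]

/-- Let `v₁,…,v_s ∈ ℝⁿ` be vectors whose `ℤ`-span `Λ` is a nonzero lattice
(a nonzero discrete subgroup), let `λ = √(λ₁(Λ))` where `λ₁(Λ)` is the minimal
square norm of a nonzero element of `Λ`, let `t ≥ 1` be an integer and `w_i` a
`t`-approximation of `v_i` for each `i`.  Equip `ℤ^s` with
`q(x) = ‖x‖² + ‖Σ_i x_i w_i‖²·t²`.  If `ω ≥ 1` is an integer with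
`t ≥ (ns+1)·√ω/λ`, then every `x ∈ ℤ^s` with `q(x) ≤ ω` satisfies
`Σ_i x_i v_i = 0`. -/
theorem stmt_2 (n s : ℕ) (v w : Fin s → EuclideanSpace ℝ (Fin n))
    (hΛ : Submodule.span ℤ (Set.range v) ≠ ⊥)
    (hdisc : ∃ ε : ℝ, 0 < ε ∧
      ∀ x ∈ Submodule.span ℤ (Set.range v), x ≠ 0 → ε ≤ ‖x‖ ^ 2)
    (lam : ℝ) (hlam : lam = Real.sqrt
      (sInf {r : ℝ | ∃ x ∈ Submodule.span ℤ (Set.range v), x ≠ 0 ∧ r = ‖x‖ ^ 2}))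
    (t : ℕ) (ht : 1 ≤ t)
    (happrox : ∀ i : Fin s, ∀ j : Fin n,
      (∃ m : ℤ, w i j = (m : ℝ) / t) ∧ |v i j - w i j| ≤ 1 / t)
    (ω : ℕ) (hω : 1 ≤ ω)
    (htω : ((n * s + 1 : ℕ) : ℝ) * Real.sqrt ω / lam ≤ t)
    (x : Fin s → ℤ)
    (hx : (∑ i : Fin s, (x i : ℝ) ^ 2) +
      ‖∑ i : Fin s, (x i : ℝ) • w i‖ ^ 2 * (t : ℝ) ^ 2 ≤ ω) :
    ∑ i : Fin s, (x i : ℝ) • v i = 0 :=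
  stmt_2_general n s v w hdisc lam hlam t happrox ω htω x hx
end

section
/- Let R ⊆ S be commutative rings such that R is semi-local, and let I ⊆ S be an R-submodule. Then I is an invertible ideal of R within S if and only if there exists a unit x ∈ S* such that I = xR. -/
/-- Let `R ⊆ S` be commutative rings with `R` semi-local (finitely many maximal
ideals), and let `I ⊆ S` be an `R`-submodule. Then `I` is an invertible ideal of `R`
within `S` (i.e. `IJ = R` for some `R`-submodule `J` of `S`) iff there is a unit
`x ∈ S*` with `I = xR`. -/
theorem stmt_3 {S : Type*} [CommRing S] (R : Subring S)
    (hsemi : {I : Ideal ↥R | I.IsMaximal}.Finite)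
    (I : Submodule ↥R S) :
    (∃ J : Submodule ↥R S, I * J = 1) ↔
      ∃ x : Sˣ, I = Submodule.span ↥R {(x : S)} := by
  constructor
  · rintro ⟨J, hIJ⟩
    classical
    set T : Finset (Ideal ↥R) := hsemi.toFinset with hT
    have hTmem : ∀ m : Ideal ↥R, m ∈ T ↔ m.IsMaximal := fun m => hsemi.mem_toFinset
    -- image of an ideal in S
    let M : Ideal ↥R → Submodule ↥R S := fun m => Submodule.map (Algebra.linearMap ↥R S) m
    have hMcoe : ∀ (m : Ideal ↥R) (r : ↥R), (r : S) ∈ M m ↔ r ∈ m := by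
      intro m r
      constructor
      · rintro h
        obtain ⟨y, hy, hyr⟩ := Submodule.mem_map.1 h
        have : y = r := Subtype.ext hyr
        rwa [← this]
      · intro h; exact Submodule.mem_map_of_mem h
    -- step 1: local avoidance
    have step1 : ∀ m ∈ T, ∃ a ∈ I, ∃ b ∈ J, a * b ∉ M m := by
      intro m hm
      by_contra h
      push_neg at h
      have hle : I * J ≤ M m := Submodule.mul_le.2 h
      rw [hIJ] at hle
      have h1 : (1 : S) ∈ M m := Submodule.one_le.1 hle
      obtain ⟨y, hy, hyr⟩ := Submodule.mem_map.1 h1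
      have : y = 1 := Subtype.ext hyr
      rw [this] at hy
      exact ((hTmem m).1 hm).ne_top (Ideal.eq_top_iff_one m |>.2 hy)
    choose a haI b hbJ hab using step1
    -- step 2: CRT elements
    have step2 : ∀ m ∈ T, ∃ e : ↥R, e ∉ m ∧ ∀ m' ∈ T, m' ≠ m → e ∈ m' := by
      intro m hm
      have hmmax := (hTmem m).1 hm
      have hinf : ¬ ((T.erase m).inf id ≤ m) := by
        intro hle
        obtain ⟨m', hm'T, hm'le⟩ := (hmmax.isPrime.inf_le').1 hle
        have hm'max := (hTmem m').1 (Finset.mem_of_mem_erase hm'T)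
        exact (Finset.ne_of_mem_erase hm'T) (hm'max.eq_of_le hmmax.ne_top hm'le)
      obtain ⟨e, heinf, hem⟩ := SetLike.not_le_iff_exists.1 hinf
      exact ⟨e, hem, fun m' hm' hne =>
        (Finset.inf_le (Finset.mem_erase.2 ⟨hne, hm'⟩) : (T.erase m).inf id ≤ m') heinf⟩
    choose e he1 he2 using step2
    -- the candidate generator
    set A0 : S := ∑ m ∈ T.attach, (e m m.2) • a m m.2 with hA0
    set B0 : S := ∑ m ∈ T.attach, (e m m.2) • b m m.2 with hB0
    have hA0I : A0 ∈ I := Submodule.sum_mem _ fun m _ => Submodule.smul_mem _ _ (haI m m.2)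
    have hB0J : B0 ∈ J := Submodule.sum_mem _ fun m _ => Submodule.smul_mem _ _ (hbJ m m.2)
    have hABone : A0 * B0 ∈ (1 : Submodule ↥R S) := by
      rw [← hIJ]; exact Submodule.mul_mem_mul hA0I hB0J
    obtain ⟨r, hr⟩ := Submodule.mem_one.1 hABone
    -- key: A0 * B0 ∉ M m for every maximal m
    have key : ∀ m ∈ T, A0 * B0 ∉ M m := by
      intro m hm
      have hsum : A0 * B0 = ∑ k ∈ T.attach, ∑ j ∈ T.attach,
          ((e k k.2) • a k k.2) * ((e j j.2) • b j j.2) := Finset.sum_mul_sum _ _ _ _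
      intro hmem
      set p : {x // x ∈ T} := ⟨m, hm⟩ with hp
      have hps : (p, p) ∈ T.attach ×ˢ T.attach :=
        Finset.mk_mem_product (Finset.mem_attach _ _) (Finset.mem_attach _ _)
      rw [← Finset.sum_product'] at hsum
      rw [← Finset.add_sum_erase _ _ hps] at hsum
      -- generic term computation
      have hterm : ∀ k j : {x // x ∈ T}, ∃ s : ↥R, (s : S) = a k.1 k.2 * b j.1 j.2 ∧
          ((e k.1 k.2) • a k.1 k.2) * ((e j.1 j.2) • b j.1 j.2)
            = ((e k.1 k.2 * e j.1 j.2 * s : ↥R) : S) := by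
        intro k j
        have hxy : a k.1 k.2 * b j.1 j.2 ∈ (1 : Submodule ↥R S) := by
          rw [← hIJ]; exact Submodule.mul_mem_mul (haI _ _) (hbJ _ _)
        obtain ⟨s, hs⟩ := Submodule.mem_one.1 hxy
        refine ⟨s, hs, ?_⟩
        show ((e k.1 k.2 : S) * a k.1 k.2) * ((e j.1 j.2 : S) * b j.1 j.2) = _
        have hs' : (s : S) = a k.1 k.2 * b j.1 j.2 := hs
        push_cast
        rw [hs']; ring
      -- the rest of the sum lies in M m
      have hrest : ∑ q ∈ (T.attach ×ˢ T.attach).erase (p, p),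
          ((e q.1.1 q.1.2) • a q.1.1 q.1.2) * ((e q.2.1 q.2.2) • b q.2.1 q.2.2) ∈ M m := by
        refine Submodule.sum_mem _ fun q hq => ?_
        obtain ⟨s, _, hcalc⟩ := hterm q.1 q.2
        rw [hcalc]
        refine (hMcoe m _).2 (Ideal.mul_mem_right _ _ ?_)
        have hne : q.1 ≠ p ∨ q.2 ≠ p := by
          rcases Finset.mem_erase.1 hq with ⟨hq1, _⟩
          by_contra hcon
          push_neg at hcon
          exact hq1 (Prod.ext hcon.1 hcon.2)
        rcases hne with h | h
        · exact Ideal.mul_mem_right _ _ (he2 q.1.1 q.1.2 m hm (fun hc => h (Subtype.ext hc.symm)))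
        · exact Ideal.mul_mem_left _ _ (he2 q.2.1 q.2.2 m hm (fun hc => h (Subtype.ext hc.symm)))
      -- the main term does not
      obtain ⟨s, hs, hcalc⟩ := hterm p p
      have hsm : s ∉ m := fun hsm => hab m hm (by rw [← hs]; exact (hMcoe m s).2 hsm)
      have hmainmem : ((e p.1 p.2) • a p.1 p.2) * ((e p.1 p.2) • b p.1 p.2) ∈ M m := by
        have := (M m).sub_mem (hsum ▸ hmem) hrest
        simpa using this
      rw [hcalc] at hmainmem
      have hprime := ((hTmem m).1 hm).isPrime
      have : e p.1 p.2 * e p.1 p.2 * s ∈ m := (hMcoe m _).1 hmainmem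
      rcases hprime.mem_or_mem this with h | h
      · rcases hprime.mem_or_mem h with h | h <;> exact he1 m hm h
      · exact hsm h
    -- r avoids all maximal ideals, so it is a unit
    have hrunit : IsUnit r := by
      by_contra hru
      obtain ⟨m, hmmax, hrm⟩ := exists_max_ideal_of_mem_nonunits hru
      have hmT : m ∈ T := (hTmem m).2 hmmax
      exact key m hmT (by rw [← hr]; exact (hMcoe m r).2 hrm)
    obtain ⟨ru, hru⟩ := hrunit
    have hr' : (r : S) = A0 * B0 := hr
    have hcoe : (r : S) * (↑ru⁻¹ : ↥R) = 1 := by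
      have h1 : r * (↑ru⁻¹ : ↥R) = 1 := by
        rw [← hru]; exact_mod_cast ru.mul_inv
      exact_mod_cast congrArg (Subtype.val) h1
    refine ⟨⟨A0, B0 * (↑ru⁻¹ : ↥R), ?_, ?_⟩, ?_⟩
    · rw [← mul_assoc, ← hr', hcoe]
    · rw [mul_comm B0 _, mul_assoc, mul_comm B0 A0, ← hr', mul_comm (((↑ru⁻¹ : ↥R)) : S) _, hcoe]
    · apply le_antisymm
      · intro y hy
        rw [Submodule.mem_span_singleton]
        have hBy : B0 * y ∈ (1 : Submodule ↥R S) := by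
          rw [← hIJ, mul_comm I J]; exact Submodule.mul_mem_mul hB0J hy
        obtain ⟨t, ht⟩ := Submodule.mem_one.1 hBy
        have ht' : (t : S) = B0 * y := ht
        refine ⟨t * (↑ru⁻¹ : ↥R), ?_⟩
        show ((t * (↑ru⁻¹ : ↥R) : ↥R) : S) * A0 = y
        push_cast
        rw [ht']
        calc B0 * y * ((↑ru⁻¹ : ↥R) : S) * A0
            = (A0 * B0) * ((↑ru⁻¹ : ↥R) : S) * y := by ring
          _ = ((r : S) * ((↑ru⁻¹ : ↥R) : S)) * y := by rw [← hr']
          _ = y := by rw [hcoe, one_mul]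
      · exact Submodule.span_le.2 (Set.singleton_subset_iff.2 hA0I)
  · rintro ⟨x, rfl⟩
    refine ⟨Submodule.span ↥R {((x⁻¹ : Sˣ) : S)}, ?_⟩
    rw [Submodule.span_mul_span, Set.singleton_mul_singleton, Units.mul_inv,
      ← Submodule.one_eq_span]
end

section
/- Let K be a number field and let G ⊆ K* be a subgroup of its multiplicative group. Then there exists a unique subring S ⊆ K, minimal with respect to inclusion, such that for every finite nonempty subset Y ⊆ G the S-submodule SY of K generated by Y is an invertible ideal of S within K. Moreover, this minimal subring S is an order, i.e. a domain whose additive group is isomorphic to ℤ^m for some m ≥ 0. -/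
/-- `S` makes all finite nonempty subsets `Y` of `G` invertible: for each such `Y`,
the `S`-submodule `SY` of `K` generated by `Y` is an invertible ideal of `S` within
`K`, i.e. `(SY)·J = S` for some `S`-submodule `J` of `K`. -/
def MakesFinsetsInvertible {K : Type*} [Field K] (G : Subgroup Kˣ) (S : Subring K) : Prop :=
  ∀ Y : Finset Kˣ, Y.Nonempty → (Y : Set Kˣ) ⊆ (G : Set Kˣ) →
    ∃ J : Submodule ↥S K,
      Submodule.span ↥S ((fun u : Kˣ => (u : K)) '' (Y : Set Kˣ)) * J = 1

/-!
Let `u` be a root of `f = a₀ + a₁X + ⋯ + aₙXⁿ ∈ ℤ[X]` and put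
`y_k = a_k + a_{k+1}u + ⋯ + aₙu^{n-k}`, the value at `u` of the `k`-th iterate of `divX` on `f`,
so that `u y_{k+1} = y_k - a_k` and `y₀ = 0`. For a subring `T`, the module `T + Tu` is
invertible iff all `y_k` lie in `T`. If they do and `f` is primitive, then `Σ T y_k` is an
inverse: the product lies in `T` and contains every `a_k = y_k - u y_{k+1}`, and the `a_k`
generate the unit ideal of `ℤ`. Conversely, each `y_k` multiplies the invertible module
`(T + Tu)ⁿ = T + Tu + ⋯ + Tuⁿ` into itself, so it lies in `T`.

Invertibility for pairs `{1, u}` with `u ∈ G` gives it for pairs `{u, v}`, since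
`Tu + Tv = Tu · (T + Tu⁻¹v)`, and then for every finite `Y ⊆ G` by induction, using the identity
`(A + B + C)(AB + AC + BC) = (A + B)(A + C)(B + C)` of idempotent semirings. So the minimal ring
is the ring generated by all the `y_k`. It lies in the ring of integers, which is Dedekind and
hence makes every `TY` invertible, so it is a free `ℤ`-module of finite rank.
-/

open Polynomial Submodule NumberField Pointwise
open scoped nonZeroDivisors

section IdemCommSemiring

variable {α : Type*} [IdemCommSemiring α]

theorem add_add_mul_add_mul_add_mul (a b c : α) :
    (a + b + c) * (a * b + a * c + b * c) = (a + b) * (a + c) * (b + c) :=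
  calc _ = a ^ 2 * b + a ^ 2 * c + a * b ^ 2 + b ^ 2 * c + a * c ^ 2 + b * c ^ 2
          + a * b * c * ((1 + 1) + 1) := by ring
    _ = a ^ 2 * b + a ^ 2 * c + a * b ^ 2 + b ^ 2 * c + a * c ^ 2 + b * c ^ 2
          + a * b * c * (1 + 1) := by simp only [add_idem]
    _ = _ := by ring

theorem isUnit_add_add_of_isUnit_add {a b c : α} (hab : IsUnit (a + b)) (hac : IsUnit (a + c))
    (hbc : IsUnit (b + c)) : IsUnit (a + b + c) :=
  isUnit_of_mul_isUnit_left (y := a * b + a * c + b * c) <| by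
    rw [add_add_mul_add_mul_add_mul]
    exact (hab.mul hac).mul hbc

theorem Finset.isUnit_sum_of_isUnit_add {ι : Type*} {f : ι → α} {s : Finset ι}
    (hs : s.Nonempty) (h : ∀ i ∈ s, ∀ j ∈ s, IsUnit (f i + f j)) : IsUnit (∑ i ∈ s, f i) := by
  classical
  induction hs using Finset.Nonempty.strong_induction with
  | h₀ a => simpa [add_idem] using h a (mem_singleton_self a) a (mem_singleton_self a)
  | @h₁ s hs ih =>
    obtain ⟨a, ha, b, hb, hab⟩ := hs
    have hb' : b ∈ s.erase a := mem_erase.2 ⟨hab.symm, hb⟩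
    have ha' : a ∈ s.erase b := mem_erase.2 ⟨hab, ha⟩
    have hrestrict {t : Finset ι} (hts : t ⊂ s) : ∀ i ∈ t, ∀ j ∈ t, IsUnit (f i + f j) :=
      fun i hi j hj => h i (hts.subset hi) j (hts.subset hj)
    have hsa := ih _ ⟨b, hb'⟩ (erase_ssubset ha) (hrestrict (erase_ssubset ha))
    have hsb := ih _ ⟨a, ha'⟩ (erase_ssubset hb) (hrestrict (erase_ssubset hb))
    rw [← add_sum_erase _ _ hb'] at hsa
    rw [← add_sum_erase _ _ ha', erase_right_comm] at hsb
    rw [← add_sum_erase _ _ ha, ← add_sum_erase _ _ hb', ← add_assoc]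
    exact isUnit_add_add_of_isUnit_add (h a ha b hb) hsb hsa

end IdemCommSemiring

namespace Polynomial

theorem coeff_divX_iterate {R : Type*} [Semiring R] (p : R[X]) (k n : ℕ) :
    (divX^[k] p).coeff n = p.coeff (n + k) := by
  induction k generalizing n with
  | zero => rfl
  | succ k ih => rw [Function.iterate_succ_apply', coeff_divX, ih, add_right_comm, add_assoc]

theorem natDegree_divX_iterate_le {R : Type*} [Semiring R] (p : R[X]) (k : ℕ) :
    (divX^[k] p).natDegree ≤ p.natDegree := by
  induction k with
  | zero => rfl
  | succ k ih => exact (Function.iterate_succ_apply' divX k p ▸ natDegree_divX_le).trans ih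

theorem mul_aeval_divX_iterate_succ {A : Type*} [CommRing A] (g : A) (f : ℤ[X]) (k : ℕ) :
    g * aeval g (divX^[k + 1] f) = aeval g (divX^[k] f) - f.coeff k := by
  have := congrArg (aeval g) (X_mul_divX_add (divX^[k] f))
  rw [map_add, map_mul, aeval_X, aeval_C, coeff_divX_iterate, zero_add,
    ← Function.iterate_succ_apply' divX] at this
  rw [← this, algebraMap_int_eq, eq_intCast, add_sub_cancel_right]

end Polynomial

namespace Submodule

variable {R A : Type*} [CommRing R] [CommRing A] [Algebra R A]

theorem mem_one_of_span_singleton_mul_le {M : Submodule R A} (hM : IsUnit M) {y : A}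
    (h : span R {y} * M ≤ M) : y ∈ (1 : Submodule R A) := by
  obtain ⟨J, hJ⟩ := isUnit_iff_exists_inv.1 hM
  have : span R {y} ≤ 1 :=
    calc span R {y} = span R {y} * M * J := by rw [mul_assoc, hJ, mul_one]
      _ ≤ M * J := mul_le_mul_left h J
      _ = 1 := hJ
  exact this (mem_span_singleton_self y)

theorem isUnit_span_singleton_unit (u : Aˣ) : IsUnit (span R {(u : A)}) :=
  isUnit_iff_exists_inv.2 ⟨span R {((u⁻¹ : Aˣ) : A)}, by
    rw [span_mul_span, Set.singleton_mul_singleton, Units.mul_inv, ← one_eq_span]⟩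

theorem isUnit_span_singleton_add_span_singleton {u v : Aˣ}
    (h : IsUnit (span R {1, ((u⁻¹ * v : Aˣ) : A)})) :
    IsUnit (span R {(u : A)} + span R {(v : A)}) := by
  have : span R {(u : A)} + span R {(v : A)} =
      span R {(u : A)} * span R {1, ((u⁻¹ * v : Aˣ) : A)} := by
    rw [span_mul_span, Set.singleton_mul, Set.image_insert_eq, Set.image_singleton, mul_one,
      Units.val_mul, Units.mul_inv_cancel_left, span_insert, add_eq_sup]
  rw [this]
  exact (isUnit_span_singleton_unit u).mul h

theorem span_image_finset_eq_sum {ι : Type*} (f : ι → A) (s : Finset ι) :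
    span R (f '' s) = ∑ i ∈ s, span R {f i} := by
  classical
  induction s using Finset.induction_on with
  | empty => simp
  | insert a s ha ih =>
    rw [Finset.coe_insert, Set.image_insert_eq, span_insert, ih, Finset.sum_insert ha, add_eq_sup]

theorem isUnit_span_image_of_isUnit_span_one_pair {G : Subgroup Aˣ}
    (hG : ∀ u ∈ G, IsUnit (span R {1, (u : A)})) {Y : Finset Aˣ} (hY : Y.Nonempty)
    (hYG : (Y : Set Aˣ) ⊆ G) : IsUnit (span R ((↑) '' (Y : Set Aˣ) : Set A)) := by
  rw [span_image_finset_eq_sum]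
  exact Finset.isUnit_sum_of_isUnit_add hY fun u hu v hv =>
    isUnit_span_singleton_add_span_singleton (hG _ (G.mul_mem (G.inv_mem (hYG hu)) (hYG hv)))

theorem pow_mem_span_one_pair_pow (g : A) {i n : ℕ} (h : i ≤ n) :
    g ^ i ∈ span R {1, g} ^ n := by
  obtain ⟨d, rfl⟩ := Nat.exists_eq_add_of_le h
  have := mul_mem_mul (pow_mem_pow (span R {1, g}) (subset_span (Set.mem_insert_of_mem 1 rfl)) i)
    (pow_mem_pow (span R {1, g}) (subset_span (Set.mem_insert 1 {g})) d)
  rwa [one_pow, mul_one, ← pow_add] at this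

theorem aeval_mem_span_one_pair_pow (g : A) {p : ℤ[X]} {n : ℕ} (hp : p.natDegree ≤ n) :
    aeval g p ∈ span R {1, g} ^ n := by
  rw [aeval_eq_sum_range]
  exact sum_mem fun i hi =>
    zsmul_mem (pow_mem_span_one_pair_pow g ((Finset.mem_range_succ_iff.1 hi).trans hp)) _

theorem exists_eq_pow_of_mem_pair_pow {g z : A} {n : ℕ} (hz : z ∈ ({1, g} : Set A) ^ n) :
    ∃ i ≤ n, z = g ^ i := by
  induction n generalizing z with
  | zero => exact ⟨0, le_rfl, by simpa using hz⟩
  | succ n ih =>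
    obtain ⟨x, hx, y, hy, rfl⟩ := Set.mem_mul.1 (by rwa [pow_succ] at hz)
    obtain ⟨i, hi, rfl⟩ := ih hx
    rcases hy with hy | hy
    · exact ⟨i, by omega, by rw [hy, mul_one]⟩
    · exact ⟨i + 1, by omega, by rw [Set.mem_singleton_iff.1 hy, pow_succ]⟩

theorem aeval_divX_iterate_mem_one {g : A} (hg : IsUnit (span R {1, g})) {f : ℤ[X]}
    (hf : aeval g f = 0) (k : ℕ) : aeval g (divX^[k] f) ∈ (1 : Submodule R A) := by
  set n := f.natDegree
  have key : ∀ i ≤ n, ∀ k, aeval g (divX^[k] f) * g ^ i ∈ span R {1, g} ^ n := by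
    intro i
    induction i with
    | zero =>
      intro _ k
      rw [pow_zero, mul_one]
      exact aeval_mem_span_one_pair_pow g (natDegree_divX_iterate_le f k)
    | succ i ih =>
      intro hi k
      cases k with
      | zero => simp [hf]
      | succ k =>
        rw [pow_succ', ← mul_assoc, mul_comm _ g, mul_aeval_divX_iterate_succ, sub_mul,
          ← zsmul_eq_mul]
        exact sub_mem (ih (by omega) k) (zsmul_mem (pow_mem_span_one_pair_pow g (by omega)) _)
  refine mem_one_of_span_singleton_mul_le (hg.pow n) ?_
  rw [span_pow, span_mul_span, span_le]
  rintro _ ⟨_, rfl, z, hz, rfl⟩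
  obtain ⟨i, hi, rfl⟩ := exists_eq_pow_of_mem_pair_pow hz
  rw [← span_pow]
  exact key i hi k

theorem intCast_mem_one (m : ℤ) : (m : A) ∈ (1 : Submodule R A) :=
  mem_one.2 ⟨m, map_intCast _ m⟩

theorem isUnit_span_one_pair_of_aeval_divX_iterate_mem_one {g : A} {f : ℤ[X]}
    (hprim : f.IsPrimitive) (hf : aeval g f = 0)
    (hy : ∀ k, aeval g (divX^[k] f) ∈ (1 : Submodule R A)) : IsUnit (span R {1, g}) := by
  set J := span R (Set.range fun k => aeval g (divX^[k] f))
  have hgy : ∀ k, g * aeval g (divX^[k] f) ∈ (1 : Submodule R A) := by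
    rintro (_ | k)
    · simp [hf]
    · rw [mul_aeval_divX_iterate_succ]
      exact sub_mem (hy k) (intCast_mem_one _)
  have hle : span R {1, g} * J ≤ 1 := by
    rw [span_mul_span, span_le]
    rintro _ ⟨x, hx, _, ⟨k, rfl⟩, rfl⟩
    rcases hx with rfl | hx
    · simpa using hy k
    · exact (Set.mem_singleton_iff.1 hx) ▸ hgy k
  have hcoeff : ∀ k, (f.coeff k : A) ∈ span R {1, g} * J := fun k => by
    rw [← sub_sub_cancel (aeval g (divX^[k] f)) (f.coeff k : A), ← mul_aeval_divX_iterate_succ]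
    exact sub_mem (one_mul (aeval g (divX^[k] f)) ▸
        mul_mem_mul (subset_span (Set.mem_insert 1 {g})) (subset_span ⟨k, rfl⟩))
      (mul_mem_mul (subset_span (Set.mem_insert_of_mem 1 rfl)) (subset_span ⟨k + 1, rfl⟩))
  have hone : (1 : A) ∈ span R {1, g} * J := by
    have : f.contentIdeal ≤
        ((span R {1, g} * J).restrictScalars ℤ).comap (Algebra.linearMap ℤ A) := by
      refine span_le.2 fun a ha => ?_
      obtain ⟨k, -, rfl⟩ := mem_coeffs_iff.1 ha
      exact hcoeff k
    rw [(isPrimitive_iff_contentIdeal_eq_top f).1 hprim] at this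
    simpa using this (mem_top : (1 : ℤ) ∈ ⊤)
  exact IsUnit.of_mul_eq_one J (le_antisymm hle (one_le.2 hone))

end Submodule

theorem Submodule.isUnit_of_fg_of_ne_bot {R K : Type*} [CommRing R] [IsDedekindDomain R]
    [Field K] [Algebra R K] [IsFractionRing R K] {I : Submodule R K} (hfg : I.FG) (hI : I ≠ ⊥) :
    IsUnit I := by
  let I' : FractionalIdeal R⁰ K := ⟨I, FractionalIdeal.isFractional_of_fg hfg⟩
  have : I' ≠ 0 := fun h =>
    hI (by simpa [I'] using congrArg ((↑) : FractionalIdeal R⁰ K → Submodule R K) h)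
  exact this.isUnit.map (FractionalIdeal.coeSubmoduleHom R⁰ K)

theorem exists_isPrimitive_aeval_eq_zero {K : Type*} [Field K] [NumberField K] (x : K) :
    ∃ f : ℤ[X], f.IsPrimitive ∧ aeval x f = 0 := by
  obtain ⟨f, hf0, hfx⟩ := (IsFractionRing.isAlgebraic_iff ℤ ℚ K).2 (IsAlgebraic.of_finite ℚ x)
  exact ⟨f.primPart, f.isPrimitive_primPart, aeval_primPart_eq_zero hf0 hfx⟩

theorem Subring.exists_addEquiv_fin_of_le_integralClosure {K : Type*} [Field K] [NumberField K]
    {S : Subring K} (hS : S ≤ (integralClosure ℤ K).toSubring) :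
    ∃ m : ℕ, Nonempty (S ≃+ (Fin m → ℤ)) := by
  let ι : S →ₗ[ℤ] 𝓞 K :=
    { toFun := fun s => ⟨s, hS s.2⟩
      map_add' := fun _ _ => rfl
      map_smul' := fun _ _ => rfl }
  have : Module.Finite ℤ S :=
    Module.Finite.of_injective ι fun a b h => Subtype.ext (congrArg ((↑) : 𝓞 K → K) h)
  have : Module.Free ℤ S := Module.free_of_finite_type_torsion_free'
  exact ⟨_, ⟨(Module.finBasis ℤ S).equivFun.toAddEquiv⟩⟩

theorem makesFinsetsInvertible_integralClosure {K : Type*} [Field K] [NumberField K]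
    (G : Subgroup Kˣ) : MakesFinsetsInvertible G (integralClosure ℤ K).toSubring := by
  intro Y hY _
  -- restate over `𝓞 K`, which is defeq and carries the Dedekind instances
  show ∃ J : Submodule (𝓞 K) K, span (𝓞 K) ((↑) '' (Y : Set Kˣ)) * J = 1
  refine isUnit_iff_exists_inv.1 (isUnit_of_fg_of_ne_bot (fg_span (Y.finite_toSet.image _)) ?_)
  obtain ⟨u, hu⟩ := hY
  exact (Submodule.ne_bot_iff _).2 ⟨u, subset_span ⟨u, hu, rfl⟩, u.ne_zero⟩

def divXIterateEvals {A : Type*} [CommRing A] (G : Subgroup Aˣ) : Set A :=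
  {y | ∃ u ∈ G, ∃ f : ℤ[X], aeval (u : A) f = 0 ∧ ∃ k, aeval (u : A) (divX^[k] f) = y}

theorem makesFinsetsInvertible_iff {K : Type*} [Field K] [NumberField K] (G : Subgroup Kˣ)
    (T : Subring K) : MakesFinsetsInvertible G T ↔ divXIterateEvals G ⊆ T := by
  constructor
  · rintro hT _ ⟨u, hu, f, hf, k, rfl⟩
    classical
    have hpair := hT {1, u} (Finset.insert_nonempty 1 {u})
      (by simp [Set.insert_subset_iff, hu, G.one_mem])
    simp only [Finset.coe_insert, Finset.coe_singleton, Set.image_insert_eq, Set.image_singleton,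
      Units.val_one] at hpair
    obtain ⟨t, ht⟩ := mem_one.1 (aeval_divX_iterate_mem_one (isUnit_iff_exists_inv.2 hpair) hf k)
    exact ht ▸ t.2
  · intro hT Y hY hYG
    refine isUnit_iff_exists_inv.1
      (isUnit_span_image_of_isUnit_span_one_pair (fun u hu => ?_) hY hYG)
    obtain ⟨f, hprim, hf⟩ := exists_isPrimitive_aeval_eq_zero (u : K)
    exact isUnit_span_one_pair_of_aeval_divX_iterate_mem_one hprim hf fun k =>
      mem_one.2 ⟨⟨_, hT ⟨u, hu, f, hf, k, rfl⟩⟩, rfl⟩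

/-- Let `K` be a number field and `G ⊆ K*` a subgroup. There is a unique subring
`S ⊆ K`, minimal with respect to inclusion, such that for every finite nonempty
subset `Y ⊆ G` the `S`-submodule `SY` of `K` is an invertible ideal of `S` within
`K`. Moreover this minimal subring is an order: its additive group is isomorphic
to `ℤ^m` for some `m ≥ 0` (it is a domain, being a subring of a field). -/
theorem stmt_8 {K : Type*} [Field K] [NumberField K] (G : Subgroup Kˣ) :
    (∃! S : Subring K, MakesFinsetsInvertible G S ∧
        ∀ T : Subring K, MakesFinsetsInvertible G T → S ≤ T) ∧
    (∀ S : Subring K,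
        (MakesFinsetsInvertible G S ∧ ∀ T : Subring K, MakesFinsetsInvertible G T → S ≤ T) →
        ∃ m : ℕ, Nonempty (↥S ≃+ (Fin m → ℤ))) := by
  have hmin : MakesFinsetsInvertible G (Subring.closure (divXIterateEvals G)) ∧
      ∀ T : Subring K, MakesFinsetsInvertible G T → Subring.closure (divXIterateEvals G) ≤ T :=
    ⟨(makesFinsetsInvertible_iff G _).2 Subring.subset_closure,
      fun T hT => Subring.closure_le.2 ((makesFinsetsInvertible_iff G T).1 hT)⟩
  refine ⟨⟨_, hmin, fun S hS => le_antisymm (hS.2 _ hmin.1) (hmin.2 S hS.1)⟩, fun S hS => ?_⟩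
  exact Subring.exists_addEquiv_fin_of_le_integralClosure
    (hS.2 _ (makesFinsetsInvertible_integralClosure G))
end

section
/- Let K be a number field and let ε be a nonzero algebraic integer of K. Then ε = 1 if and only if for every ring homomorphism σ : K → ℂ there exists k_σ ∈ ℤ such that |log σ(ε) − k_σ·2πi| < log 2, where log denotes the principal branch of the complex logarithm. -/
/-!
Writing `σ ε = exp z` with `z = log (σ ε) - 2πik`, the bound `‖z‖ < log 2` gives
`‖σ ε - 1‖ ≤ exp ‖z‖ - 1 < 1` for every embedding `σ`. So every conjugate of the algebraic
integer `ε - 1` lies in the open unit disc, which forces `ε - 1 = 0`: a nonzero algebraic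
integer has a norm of absolute value at least `1`, hence a conjugate of absolute value at
least `1`.
-/

namespace Complex

theorem norm_exp_sub_one_le_exp_norm_sub_one (z : ℂ) : ‖exp z - 1‖ ≤ Real.exp ‖z‖ - 1 := by
  simpa using norm_exp_sub_sum_le_exp_norm_sub_sum z 1

theorem norm_sub_one_lt_one_of_norm_log_sub_lt_log_two {w : ℂ} (hw : w ≠ 0) {k : ℤ}
    (h : ‖log w - k * (2 * Real.pi * I)‖ < Real.log 2) : ‖w - 1‖ < 1 := by
  set z := log w - k * (2 * Real.pi * I)
  have hexp : exp z = w := by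
    rw [exp_sub, exp_log hw, exp_int_mul_two_pi_mul_I, div_one]
  calc ‖w - 1‖ = ‖exp z - 1‖ := by rw [hexp]
    _ ≤ Real.exp ‖z‖ - 1 := norm_exp_sub_one_le_exp_norm_sub_one z
    _ < Real.exp (Real.log 2) - 1 := by gcongr
    _ = 1 := by rw [Real.exp_log two_pos]; norm_num

end Complex

namespace NumberField

theorem eq_zero_of_forall_norm_embedding_lt_one {K : Type*} [Field K] [NumberField K] {α : K}
    (hα : IsIntegral ℤ α) (h : ∀ σ : K →+* ℂ, ‖σ α‖ < 1) : α = 0 := by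
  by_contra hα0
  have hα0' : (⟨α, hα⟩ : 𝓞 K) ≠ 0 := fun h0 ↦ hα0 (congrArg Subtype.val h0)
  obtain ⟨σ, hσ⟩ := exists_conjugate_one_le_norm hα0'
  exact (h σ).not_ge hσ

end NumberField

/-- Let `K` be a number field and `ε` a nonzero algebraic integer of `K`. Then `ε = 1`
iff for every ring homomorphism `σ : K → ℂ` there is `k_σ ∈ ℤ` with
`|log σ(ε) − k_σ·2πi| < log 2`, where `log` is the principal branch of the complex
logarithm. -/
theorem stmt_9 {K : Type*} [Field K] [NumberField K]
    (ε : K) (hε : ε ∈ integralClosure ℤ K) (hε0 : ε ≠ 0) :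
    ε = 1 ↔ ∀ σ : K →+* ℂ, ∃ k : ℤ,
      ‖Complex.log (σ ε) - (k : ℂ) * (2 * Real.pi * Complex.I)‖ < Real.log 2 := by
  refine ⟨fun h σ ↦ ⟨0, by simp [h, Real.log_pos one_lt_two]⟩, fun h ↦ ?_⟩
  have hconj : ∀ σ : K →+* ℂ, ‖σ (ε - 1)‖ < 1 := fun σ ↦ by
    obtain ⟨k, hk⟩ := h σ
    rw [map_sub, map_one]
    exact Complex.norm_sub_one_lt_one_of_norm_log_sub_lt_log_two
      ((map_ne_zero σ).mpr hε0) hk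
  exact sub_eq_zero.mp <|
    NumberField.eq_zero_of_forall_norm_embedding_lt_one (sub_mem hε (one_mem _)) hconj
end

section
/- Let R be a local commutative ring with residue field κ(R), let S be a semi-local commutative R-algebra, and let M ⊆ S be an R-submodule such that M ⊄ 𝔪 for every maximal ideal 𝔪 of S. If S has at most #κ(R) maximal ideals (as a comparison of cardinals), then M contains a unit of S, i.e. M ∩ S* ≠ ∅. -/
universe u v

/-- Avoidance lemma: over a local ring, if we have a family of elements `c i` with
pairwise unit differences, then a module cannot be covered by proper submodules
indexed by a finset of that family's index type. -/
lemma avoid_aux {R : Type u} [CommRing R] [IsLocalRing R] {N : Type v} [AddCommGroup N]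
    [Module R N] {ι : Type v} (c : ι → R)
    (hc : ∀ i j, i ≠ j → IsUnit (c i - c j))
    (p : ι → Submodule R N) (s : Finset ι) (hp : ∀ i ∈ s, p i ≠ ⊤) :
    ∃ x : N, ∀ i ∈ s, x ∉ p i := by
  classical
  induction s using Finset.induction with
  | empty => exact ⟨0, by simp⟩
  | @insert a s ha ih =>
    obtain ⟨x, hx⟩ := ih fun i hi => hp i (Finset.mem_insert_of_mem hi)
    by_cases hxa : x ∉ p a
    · refine ⟨x, fun i hi => ?_⟩
      rcases Finset.mem_insert.mp hi with rfl | hi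
      · exact hxa
      · exact hx i hi
    push_neg at hxa
    -- x ∈ p a, x ∉ p i for i ∈ s
    have hpa := hp a (Finset.mem_insert_self a s)
    obtain ⟨y, hy⟩ : ∃ y : N, y ∉ p a := by
      by_contra h; push_neg at h
      exact hpa (Submodule.eq_top_iff'.mpr h)
    by_contra hcon
    push_neg at hcon
    -- every element lies in some p i, i ∈ insert a s
    -- y lies in some p i₀, i₀ ∈ s
    obtain ⟨i₀, hi₀, hyi₀⟩ := hcon y
    have hi₀s : i₀ ∈ s := by
      rcases Finset.mem_insert.mp hi₀ with rfl | h
      · exact absurd hyi₀ hy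
      · exact h
    -- the elements z i := x + c i • y
    set z : ι → N := fun i => x + c i • y with hz
    -- choose for each i an index f i with z i ∈ p (f i)
    choose f hf hzf using fun i => hcon (z i)
    -- f i ≠ i₀
    have hfne : ∀ i, f i ≠ i₀ := by
      intro i hfi
      have : x ∈ p i₀ := by
        have h1 : z i ∈ p i₀ := hfi ▸ hzf i
        have h2 : c i • y ∈ p i₀ := Submodule.smul_mem _ _ hyi₀
        simpa [hz] using (p i₀).sub_mem h1 h2
      exact hx i₀ hi₀s this
    -- f is injective on insert a s
    have hinj : Set.InjOn f (insert a s : Finset ι) := by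
      intro i hi j hj hij
      by_contra hne
      have h1 : z i ∈ p (f i) := hzf i
      have h2 : z j ∈ p (f i) := hij ▸ hzf j
      have h3 : (c i - c j) • y ∈ p (f i) := by
        have := (p (f i)).sub_mem h1 h2
        simpa [hz, sub_smul] using this
      have hyfi : y ∈ p (f i) := by
        obtain ⟨u, hu⟩ := hc i j hne
        have := (p (f i)).smul_mem (↑u⁻¹) h3
        rwa [← hu, smul_smul, Units.inv_mul, one_smul] at this
      have hxfi : x ∈ p (f i) := by
        have := (p (f i)).sub_mem h1 ((p (f i)).smul_mem (c i) hyfi)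
        simpa [hz] using this
      rcases Finset.mem_insert.mp (hf i) with hfa | hfs
      · exact hy (hfa ▸ hyfi)
      · exact hx (f i) hfs hxfi
    -- so f maps insert a s injectively into (insert a s).erase i₀ : contradiction
    have hcard : (insert a s).card ≤ ((insert a s).erase i₀).card := by
      apply Finset.card_le_card_of_injOn f
      · intro i hi
        exact Finset.mem_erase.mpr ⟨hfne i, hf i⟩
      · exact fun i hi j hj => hinj hi hj
    rw [Finset.card_erase_of_mem (Finset.mem_insert_of_mem hi₀s)] at hcard
    have hpos : 0 < (insert a s).card := Finset.card_pos.mpr ⟨a, Finset.mem_insert_self a s⟩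
    omega

/-- Let `R` be a local commutative ring with residue field `κ(R)`, let `S` be a
semi-local commutative `R`-algebra, and let `M ⊆ S` be an `R`-submodule not
contained in any maximal ideal of `S`. If `S` has at most `#κ(R)` maximal ideals
(comparison of cardinals), then `M` contains a unit of `S`. -/
theorem stmt_10 {R : Type u} {S : Type v} [CommRing R] [IsLocalRing R] [CommRing S] [Algebra R S]
    (hsemi : {I : Ideal S | I.IsMaximal}.Finite)
    (M : Submodule R S)
    (hM : ∀ 𝔪 : Ideal S, 𝔪.IsMaximal → ¬ (M : Set S) ⊆ (𝔪 : Set S))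
    (hcard : Cardinal.lift.{u} (Cardinal.mk {I : Ideal S // I.IsMaximal}) ≤
      Cardinal.lift.{v} (Cardinal.mk (IsLocalRing.ResidueField R))) :
    ∃ x ∈ M, IsUnit x := by
  classical
  set ι := {I : Ideal S // I.IsMaximal}
  haveI : Finite ι := hsemi.to_subtype
  haveI := Fintype.ofFinite ι
  obtain ⟨e⟩ : Nonempty (ι ↪ IsLocalRing.ResidueField R) := Cardinal.lift_mk_le'.mp hcard
  -- lift representatives to R
  choose c hcres using fun i : ι => IsLocalRing.residue_surjective (R := R) (e i)
  have hc : ∀ i j : ι, i ≠ j → IsUnit (c i - c j) := by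
    intro i j hij
    rw [← IsLocalRing.notMem_maximalIdeal, ← Ideal.Quotient.eq_zero_iff_mem]
    have : IsLocalRing.residue R (c i - c j) = e i - e j := by
      rw [map_sub, hcres i, hcres j]
    rw [show (Ideal.Quotient.mk (IsLocalRing.maximalIdeal R)) (c i - c j)
        = IsLocalRing.residue R (c i - c j) from rfl, this]
    exact sub_ne_zero.mpr fun h => hij (e.injective h)
  -- submodules of M pulled back from maximal ideals
  set p : ι → Submodule R M := fun i => ((i.1.restrictScalars R).comap M.subtype) with hp
  have hpne : ∀ i ∈ (Finset.univ : Finset ι), p i ≠ ⊤ := by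
    intro i _ htop
    apply hM i.1 i.2
    intro x hx
    have : (⟨x, hx⟩ : M) ∈ p i := htop ▸ Submodule.mem_top
    exact this
  obtain ⟨x, hx⟩ := avoid_aux c hc p Finset.univ hpne
  refine ⟨(x : S), x.2, ?_⟩
  by_contra hxu
  have hspan : Ideal.span {(x : S)} ≠ ⊤ := fun h => hxu (Ideal.span_singleton_eq_top.mp h)
  obtain ⟨I, hImax, hIle⟩ := Ideal.exists_le_maximal _ hspan
  exact hx ⟨I, hImax⟩ (Finset.mem_univ _)
    (hIle (Ideal.subset_span (Set.mem_singleton _)))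
end

section
/- Let R ⊆ S be commutative rings with R local, and let M ⊆ S be an R-submodule with 1 ∈ M. Suppose that for some integer n ≥ 0 the R-module ⋃_{k ≥ 0} Mᵏ can be generated by at most n + 1 elements and that (Mⁿ : Mⁿ)_S = R. Then M = R. -/
/-!
Let `A = ⨆ₖ Mᵏ` and let `𝔪` be the maximal ideal of `R`. By Nakayama `1 ∉ 𝔪A`, so the images of
`M⁰ ⊆ M¹ ⊆ ⋯ ⊆ Mⁿ⁺¹` in `A/𝔪A`, a vector space of dimension at most `n + 1` over `R/𝔪`, are
`n + 2` nonzero subspaces; two consecutive ones coincide, i.e. `Mʲ⁺¹ ⊆ Mʲ + 𝔪A` for some `j ≤ n`.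
Multiplying by powers of `M` gives `Mᵏ ⊆ Mʲ + 𝔪A` for all `k ≥ j`; as `A` is finitely generated it
equals some `Mᴺ`, so `A ⊆ Mʲ + 𝔪A` and Nakayama yields `A = Mʲ = Mⁿ`. Hence `M Mⁿ ⊆ Mⁿ`, that is
`M ⊆ (Mⁿ : Mⁿ) = R`.
-/

open Submodule IsLocalRing

namespace Submodule

variable {R : Type*} [CommRing R] {S : Type*} [CommRing S] [Algebra R S]

lemma mul_smul_le_smul {N P : Submodule R S} (I : Ideal R) (h : N * P ≤ P) :
    N * (I • P) ≤ I • P := by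
  rw [mul_le]
  intro x hx y hy
  refine smul_induction_on hy (fun r hr p hp => ?_) (fun a b ha hb => ?_)
  · rw [mul_smul_comm]
    exact smul_mem_smul hr (h (mul_mem_mul hx hp))
  · rw [mul_add]
    exact add_mem ha hb

lemma one_notMem_smul [Nontrivial S] {P : Submodule R S} (hfg : P.FG) (h1 : (1 : S) ∈ P)
    (hmul : P * P ≤ P) {I : Ideal R} (hI : I ≤ Ideal.jacobson ⊥) : (1 : S) ∉ I • P := by
  intro h
  have hle : P ≤ I • P := calc
    P = P * 1 := (mul_one P).symm
    _ ≤ P * (I • P) := mul_le_mul_right (one_le.2 h) P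
    _ ≤ I • P := mul_smul_le_smul I hmul
  have hbot := eq_bot_of_le_smul_of_le_jacobson_bot I P hfg hle hI
  exact one_ne_zero ((mem_bot R).1 (hbot ▸ h1))

lemma pow_mul_iSup_pow_le (M : Submodule R S) (i : ℕ) : M ^ i * ⨆ k, M ^ k ≤ ⨆ k, M ^ k := by
  rw [mul_iSup]
  exact iSup_le fun k => (pow_add M i k).symm.le.trans (le_iSup (M ^ ·) (i + k))

lemma iSup_pow_mul_le (M : Submodule R S) : (⨆ k, M ^ k) * ⨆ k, M ^ k ≤ ⨆ k, M ^ k := by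
  rw [iSup_mul]
  exact iSup_le (pow_mul_iSup_pow_le M)

lemma one_mem_iSup_pow (M : Submodule R S) : (1 : S) ∈ ⨆ k, M ^ k :=
  le_iSup (M ^ ·) 0 (by rw [pow_zero]; exact one_le.1 le_rfl)

lemma exists_pow_eq_iSup_pow {M : Submodule R S} (h1 : (1 : S) ∈ M) (hfg : (⨆ k, M ^ k).FG) :
    ∃ N, M ^ N = ⨆ k, M ^ k := by
  obtain ⟨s, hs⟩ := CompleteLattice.IsCompactElement.exists_finset_of_le_iSup _
    ((fg_iff_compact _).1 hfg) (M ^ ·) le_rfl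
  refine ⟨s.sup id, le_antisymm (le_iSup (M ^ ·) _) (hs.trans (iSup₂_le fun k hk => ?_))⟩
  exact pow_right_monotone (one_le.2 h1) (Finset.le_sup (f := id) hk)

lemma iSup_pow_le_pow_of_pow_succ_le {M : Submodule R S} (h1 : (1 : S) ∈ M)
    (hfg : (⨆ k, M ^ k).FG) {I : Ideal R} (hI : I ≤ Ideal.jacobson ⊥) {j : ℕ}
    (hj : M ^ (j + 1) ≤ M ^ j ⊔ I • ⨆ k, M ^ k) : ⨆ k, M ^ k ≤ M ^ j := by
  set A := ⨆ k, M ^ k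
  have hpow : ∀ i, M ^ (j + i) ≤ M ^ j ⊔ I • A := by
    intro i
    induction i with
    | zero => exact le_sup_left
    | succ i ih => calc
        M ^ (j + (i + 1)) = M ^ i * M ^ (j + 1) := by rw [← pow_add]; ring_nf
        _ ≤ M ^ i * (M ^ j ⊔ I • A) := mul_le_mul_right hj _
        _ = M ^ (j + i) ⊔ M ^ i * (I • A) := by rw [mul_sup, ← pow_add, add_comm i]
        _ ≤ M ^ j ⊔ I • A :=
          sup_le ih (le_sup_of_le_right (mul_smul_le_smul I (pow_mul_iSup_pow_le M i)))
  obtain ⟨N, hN⟩ := exists_pow_eq_iSup_pow h1 hfg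
  refine le_of_le_smul_of_le_jacobson_bot hfg hI ?_
  calc A = M ^ N := hN.symm
    _ ≤ M ^ (j + N) := pow_right_monotone (one_le.2 h1) (Nat.le_add_left N j)
    _ ≤ M ^ j ⊔ I • A := hpow N

end Submodule

lemma IsLocalRing.add_one_le_spanFinrank_of_strictMono {R : Type*} [CommRing R] [IsLocalRing R]
    {X : Type*} [AddCommGroup X] [Module R X] {P : Submodule R X} (hP : P.FG) {k : ℕ}
    {f : Fin (k + 1) → Submodule R X} (hf : StrictMono f) (h0 : maximalIdeal R • P < f 0)
    (hk : f (Fin.last k) ≤ P) : k + 1 ≤ P.spanFinrank := by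
  let I := maximalIdeal R
  let _ := Ideal.Quotient.field I
  have _ : Module.Finite R P := Module.Finite.iff_fg.2 hP
  have _ : Module.Finite (R ⧸ I) (P ⧸ I • (⊤ : Submodule R P)) :=
    Module.Finite.of_restrictScalars_finite R _ _
  have hlen : Module.length R (P ⧸ I • (⊤ : Submodule R P)) = P.spanFinrank := by
    rw [spanFinrank_eq_finrank_quotient P hP, ← Module.length_eq_finrank,
      Module.length_eq_of_surjective (Ideal.Quotient.mk_surjective (I := I))]
  have hIP : P.mapIic (I • ⊤) = ⟨I • P, smul_le_right⟩ := by
    ext1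
    exact (map_smul'' _ _ _).trans (by rw [map_subtype_top])
  rw [Module.length_quotient, ← Order.coheight_orderIso P.mapIic, hIP] at hlen
  let g : Fin (k + 1) → Set.Iic P := fun i => ⟨f i, (hf.monotone (Fin.le_last i)).trans hk⟩
  have hg : StrictMono g := hf
  have hlength : (k : ℕ∞) ≤ Order.coheight (g 0) :=
    Order.length_le_coheight_head (p := LTSeries.mk k g hg)
  have hstep := Order.coheight_add_one_le (show (⟨I • P, smul_le_right⟩ : Set.Iic P) < g 0 from h0)
  rw [hlen] at hstep
  exact_mod_cast (add_le_add_left hlength 1).trans hstep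

theorem Submodule.pow_eq_iSup_pow_of_spanFinrank_le {R : Type*} [CommRing R] [IsLocalRing R]
    {S : Type*} [CommRing S] [Algebra R S] {M : Submodule R S} (h1 : (1 : S) ∈ M)
    (hfg : (⨆ k, M ^ k).FG) {n : ℕ} (hn : (⨆ k, M ^ k).spanFinrank ≤ n + 1) :
    M ^ n = ⨆ k, M ^ k := by
  nontriviality S
  set A := ⨆ k, M ^ k
  have hI := (jacobson_eq_maximalIdeal (R := R) ⊥ bot_ne_top).ge
  obtain ⟨j, hjn, hj⟩ : ∃ j ≤ n, M ^ (j + 1) ≤ M ^ j ⊔ maximalIdeal R • A := by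
    by_contra! hstep
    let f : Fin (n + 2) → Submodule R S := fun j => M ^ (j : ℕ) ⊔ maximalIdeal R • A
    have hf : StrictMono f := Fin.strictMono_iff_lt_succ.2 fun j => lt_of_le_not_ge
      (sup_le_sup_right (pow_right_monotone (one_le.2 h1) j.castSucc_le_succ) _)
      fun h => hstep j (by omega) (le_sup_left.trans h)
    have h0 : maximalIdeal R • A < f 0 := lt_of_le_not_ge le_sup_right fun h =>
      one_notMem_smul hfg (one_mem_iSup_pow M) (iSup_pow_mul_le M) hI
        (h (le_sup_left (b := maximalIdeal R • A) (by simp [one_le.1])))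
    have hcount := add_one_le_spanFinrank_of_strictMono hfg hf h0
      (sup_le (le_iSup (M ^ ·) _) smul_le_right)
    omega
  exact le_antisymm (le_iSup (M ^ ·) n) ((iSup_pow_le_pow_of_pow_succ_le h1 hfg hI hj).trans
    (pow_right_monotone (one_le.2 h1) hjn))

/-- Let `R ⊆ S` be commutative rings with `R` local, and `M ⊆ S` an `R`-submodule
with `1 ∈ M`. If for some `n ≥ 0` the `R`-module `⋃_{k ≥ 0} Mᵏ` can be generated by
at most `n + 1` elements and `(Mⁿ : Mⁿ)_S = R`, then `M = R`. -/
theorem stmt_11 {S : Type*} [CommRing S] (R : Subring S) [IsLocalRing ↥R]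
    (M : Submodule ↥R S) (h1 : (1 : S) ∈ M) (n : ℕ)
    (hgen : ∃ T : Finset S, T.card ≤ n + 1 ∧
      Submodule.span ↥R (T : Set S) = ⨆ k : ℕ, M ^ k)
    (hdiv : (M ^ n / M ^ n : Submodule ↥R S) = 1) :
    M = 1 := by
  obtain ⟨T, hTcard, hTspan⟩ := hgen
  have hrank : (⨆ k, M ^ k).spanFinrank ≤ n + 1 := by
    rw [← hTspan]
    exact (spanFinrank_span_le_ncard_of_finite T.finite_toSet).trans
      (by rwa [Set.ncard_coe_finset])
  have hstab := pow_eq_iSup_pow_of_spanFinrank_le h1 ⟨T, hTspan⟩ hrank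
  refine le_antisymm ?_ (one_le.2 h1)
  rw [← hdiv, Submodule.le_div_iff_mul_le, ← pow_succ', hstab]
  exact le_iSup (M ^ ·) (n + 1)
end

section
/- Let R be a local commutative ring and let I, J ⊆ R be ideals. If I + J is a principal ideal, then I ⊆ J or J ⊆ I. -/
/-- Let `R` be a local commutative ring and `I, J ⊆ R` ideals. If `I + J` is a
principal ideal, then `I ⊆ J` or `J ⊆ I`. -/
theorem stmt_12 {R : Type*} [CommRing R] [IsLocalRing R] (I J : Ideal R)
    (h : ∃ x : R, I ⊔ J = Ideal.span {x}) :
    I ≤ J ∨ J ≤ I := by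
  obtain ⟨x, hx⟩ := h
  have hxmem : x ∈ I ⊔ J := hx ▸ Ideal.mem_span_singleton_self x
  obtain ⟨a, ha, b, hb, hab⟩ := Submodule.mem_sup.mp hxmem
  obtain ⟨r, hr⟩ := Ideal.mem_span_singleton'.mp (hx ▸ (le_sup_left : I ≤ I ⊔ J) ha)
  obtain ⟨s, hs⟩ := Ideal.mem_span_singleton'.mp (hx ▸ (le_sup_right : J ≤ I ⊔ J) hb)
  have hsum : (r + s) + (1 - r - s) = 1 := by ring
  rcases IsLocalRing.isUnit_or_isUnit_of_add_one hsum with hu | hu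
  · rcases IsLocalRing.isUnit_or_isUnit_of_isUnit_add hu with hr' | hs'
    · right
      calc J ≤ I ⊔ J := le_sup_right
        _ = Ideal.span {x} := hx
        _ ≤ I := by
            rw [Ideal.span_le, Set.singleton_subset_iff]
            obtain ⟨u, hu'⟩ := hr'
            have : x = (↑u⁻¹ : R) * a := by
              rw [← hr, ← hu', ← mul_assoc, Units.inv_mul, one_mul]
            rw [this]
            exact I.mul_mem_left _ ha
    · left
      calc I ≤ I ⊔ J := le_sup_left
        _ = Ideal.span {x} := hx
        _ ≤ J := by
            rw [Ideal.span_le, Set.singleton_subset_iff]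
            obtain ⟨u, hu'⟩ := hs'
            have : x = (↑u⁻¹ : R) * b := by
              rw [← hs, ← hu', ← mul_assoc, Units.inv_mul, one_mul]
            rw [this]
            exact J.mul_mem_left _ hb
  · -- x = 0
    have hx0 : x = 0 := by
      have h0 : (1 - r - s) * x = 0 := by
        have : r * x + s * x = x := by rw [hr, hs, hab]
        linear_combination -this
      exact (hu.mul_right_eq_zero).mp h0
    left
    have hI : I ≤ Ideal.span ({x} : Set R) := hx ▸ le_sup_left
    rw [hx0] at hI
    simp only [Set.singleton_zero, Ideal.span_zero, le_bot_iff] at hI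
    rw [hI]
    exact bot_le
end

section
/- Let m be a square-free positive integer and let B be a commutative algebra over A = ℤ/mℤ that is free of finite rank as an A-module. If p > rk_A(B) for all primes p dividing m, then the trace radical Trad(B/A) = { x ∈ B : Tr_{B/A}(xB) = 0 } equals the nilradical nil(B) of B. -/
/-!
Nilpotent elements have nilpotent, hence zero, traces over the reduced ring `ℤ/mℤ`.
Conversely, let `x` be in the trace radical, so that every `Tr(x^(j+1))` vanishes, and let `P`
be a prime of `B`; its residue characteristic is a prime `p ∣ m`. Over `𝔽_p`, multiplication by
`1 ⊗ x` on `𝔽_p ⊗ B` has trace-free powers. Since the endomorphism monoid is finite, some power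
`e` of it is idempotent, and then `tr e = rank e` is divisible by `p > rk B`, so `e = 0`. Thus
`1 ⊗ x` is nilpotent, hence so is its image `x mod P` in the domain `B ⧸ P`, i.e. `x ∈ P`.
-/

open Module TensorProduct

theorem exists_pow_isIdempotentElem {M : Type*} [Monoid M] [Finite M] (x : M) :
    ∃ n, 0 < n ∧ IsIdempotentElem (x ^ n) := by
  obtain ⟨i, j, hij, h⟩ := Finite.exists_ne_map_eq_of_infinite (x ^ · : ℕ → M)
  wlog hlt : i < j generalizing i j
  · exact this j i hij.symm h.symm (by omega)
  obtain ⟨d, rfl⟩ := Nat.exists_eq_add_of_lt hlt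
  have hper : Function.Periodic (fun k => x ^ (i + k)) (d + 1) := fun k => by
    show x ^ (i + (k + (d + 1))) = x ^ (i + k)
    rw [show i + (k + (d + 1)) = i + d + 1 + k by ring, pow_add, ← h, ← pow_add]
  refine ⟨(i + 1) * (d + 1), by positivity, ?_⟩
  have := (hper.nat_mul (i + 1)) (i * d + d + 1)
  simp only [Nat.cast_id] at this
  rw [IsIdempotentElem, ← pow_add]
  convert this using 2 <;> ring

theorem Module.End.isNilpotent_of_trace_pow_succ_eq_zero {K V : Type*} [Field K] [Finite K]
    [AddCommGroup V] [Module K V] [FiniteDimensional K V] (p : ℕ) [CharP K p]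
    (hV : finrank K V < p) {f : Module.End K V}
    (hf : ∀ j, LinearMap.trace K V (f ^ (j + 1)) = 0) : IsNilpotent f := by
  have : Finite (Module.End K V) := Module.finite_of_finite K
  obtain ⟨n, hn, he⟩ := exists_pow_isIdempotentElem f
  refine ⟨n, ?_⟩
  have hrank : (finrank K (LinearMap.range (f ^ n)) : K) = 0 := by
    rw [← (LinearMap.IsIdempotentElem.isProj_range _ he).trace, ← Nat.sub_add_cancel hn]
    exact hf _
  rw [CharP.cast_eq_zero_iff K p] at hrank
  have : finrank K (LinearMap.range (f ^ n)) = 0 :=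
    Nat.eq_zero_of_dvd_of_lt hrank ((Submodule.finrank_le _).trans_lt hV)
  exact LinearMap.range_eq_bot.mp (Submodule.finrank_eq_zero.mp this)

theorem Algebra.isNilpotent_one_tmul_of_trace_pow_succ_eq_zero {R B K : Type*} [CommRing R]
    [CommRing B] [Algebra R B] [Module.Free R B] [Module.Finite R B] [Field K] [Finite K]
    [Algebra R K] (p : ℕ) [CharP K p] (hB : finrank R B < p) {x : B}
    (hx : ∀ j, Algebra.trace R B (x ^ (j + 1)) = 0) : IsNilpotent ((1 : K) ⊗ₜ[R] x) := by
  have : Nontrivial R := (algebraMap R K).domain_nontrivial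
  rw [← LinearMap.isNilpotent_mulLeft_iff K]
  refine Module.End.isNilpotent_of_trace_pow_succ_eq_zero p
    (by rwa [Module.finrank_baseChange]) fun j => ?_
  have := congrArg (algebraMap R K) (hx j)
  rwa [Algebra.trace_apply, map_zero, ← LinearMap.trace_baseChange, map_pow,
    LinearMap.baseChange_pow, Algebra.baseChange_lmul] at this

theorem ZMod.exists_prime_dvd_charP_of_isDomain {m : ℕ} [NeZero m] {C : Type*} [CommRing C]
    [IsDomain C] [Algebra (ZMod m) C] : ∃ p, p.Prime ∧ p ∣ m ∧ CharP C p := by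
  have hm : (m : C) = 0 := by
    rw [← map_natCast (algebraMap (ZMod m) C), ZMod.natCast_self, map_zero]
  have hdvd : ringChar C ∣ m := ringChar.dvd hm
  refine ⟨ringChar C, ?_, hdvd, inferInstance⟩
  exact (CharP.char_is_prime_or_zero C _).resolve_right fun h0 =>
    NeZero.ne m (Nat.eq_zero_of_zero_dvd (h0 ▸ hdvd))

theorem Ideal.mem_of_isNilpotent_one_tmul {R B K : Type*} [CommRing R] [CommRing B]
    [Algebra R B] [CommRing K] [Algebra R K] {P : Ideal B} [P.IsPrime] (f : K →ₐ[R] B ⧸ P)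
    {x : B} (hx : IsNilpotent ((1 : K) ⊗ₜ[R] x)) : x ∈ P := by
  have := hx.map (Algebra.TensorProduct.lift f (Ideal.Quotient.mkₐ R P) fun _ _ => .all _ _)
  simp only [Algebra.TensorProduct.lift_tmul, map_one, Ideal.Quotient.mkₐ_eq_mk, one_mul] at this
  exact Ideal.Quotient.eq_zero_iff_mem.mp this.eq_zero

theorem ZMod.mem_nilradical_of_forall_trace_mul_eq_zero {m : ℕ} [NeZero m] {B : Type*}
    [CommRing B] [Algebra (ZMod m) B] [Module.Free (ZMod m) B] [Module.Finite (ZMod m) B]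
    (hp : ∀ p : ℕ, p.Prime → p ∣ m → finrank (ZMod m) B < p) {x : B}
    (hx : ∀ y, Algebra.trace (ZMod m) B (x * y) = 0) : x ∈ nilradical B := by
  rw [nilradical_eq_sInf, Submodule.mem_sInf]
  rintro P (hP : Ideal.IsPrime P)
  obtain ⟨p, hp_prime, hpm, _⟩ := ZMod.exists_prime_dvd_charP_of_isDomain (m := m) (C := B ⧸ P)
  have : Fact p.Prime := ⟨hp_prime⟩
  let : Algebra (ZMod m) (ZMod p) := ZMod.algebra' (ZMod p) p hpm
  let f : ZMod p →ₐ[ZMod m] B ⧸ P :=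
    { ZMod.castHom dvd_rfl (B ⧸ P) with
      commutes' := fun r => congr($(RingHom.ext_zmod
        ((ZMod.castHom dvd_rfl (B ⧸ P)).comp (algebraMap (ZMod m) (ZMod p)))
        (algebraMap (ZMod m) (B ⧸ P))) r) }
  refine Ideal.mem_of_isNilpotent_one_tmul f
    (Algebra.isNilpotent_one_tmul_of_trace_pow_succ_eq_zero p (hp p hp_prime hpm) fun j => ?_)
  rw [pow_succ']
  exact hx _

theorem stmt_13_general (m : ℕ) (hsf : Squarefree m)
    {B : Type*} [CommRing B] [Algebra (ZMod m) B]
    [Module.Free (ZMod m) B] [Module.Finite (ZMod m) B]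
    (hp : ∀ p : ℕ, p.Prime → p ∣ m → Module.finrank (ZMod m) B < p) :
    ∀ x : B, (∀ y : B, Algebra.trace (ZMod m) B (x * y) = 0) ↔ x ∈ nilradical B := by
  have : NeZero m := ⟨hsf.ne_zero⟩
  have : IsReduced (ZMod m) := isReduced_zmod.mpr (Or.inl hsf)
  refine fun x => ⟨ZMod.mem_nilradical_of_forall_trace_mul_eq_zero hp, fun hx y => ?_⟩
  exact (Algebra.isNilpotent_trace_of_isNilpotent
    (Commute.isNilpotent_mul_right (.all x y) hx)).eq_zero

/-- Let `m` be a square-free positive integer and `B` a commutative algebra over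
`A = ℤ/mℤ` that is free of finite rank as an `A`-module. If `p > rk_A(B)` for all
primes `p` dividing `m`, then the trace radical `Trad(B/A) = {x ∈ B : Tr_{B/A}(xB) = 0}`
equals the nilradical of `B`. -/
theorem stmt_13 (m : ℕ) (hm : 0 < m) (hsf : Squarefree m)
    {B : Type*} [CommRing B] [Algebra (ZMod m) B]
    [Module.Free (ZMod m) B] [Module.Finite (ZMod m) B]
    (hp : ∀ p : ℕ, p.Prime → p ∣ m → Module.finrank (ZMod m) B < p) :
    ∀ x : B, (∀ y : B, Algebra.trace (ZMod m) B (x * y) = 0) ↔ x ∈ nilradical B :=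
  stmt_13_general m hsf hp
end

section
/- Let R be a full-rank order in a number field K and let p be a prime number. Then p divides the index #(𝒪_K/R) of R in the maximal order 𝒪_K if and only if R has a non-invertible prime ideal containing p, i.e. a prime ideal 𝔭 of R with p ∈ 𝔭 such that there is no R-submodule J of K with 𝔭J = R. -/
/-!
Let `m = #(𝒪_K/R)` and let `𝔣 = (R :_R 𝒪_K)` be the conductor of `R` in `𝒪_K`; it contains `m`
because `m𝒪_K ⊆ R`.
For a maximal ideal `𝔪` of `R`:

* if `𝔣 ⊄ 𝔪`, pick `m' ∈ 𝔣 \ 𝔪` and an inverse `𝔍` of `𝔪𝒪_K` in the Dedekind domain `𝒪_K`;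
  then `𝔪 (m'𝔍 + R) = R`, since `𝔪 m'𝔍 = m'𝒪_K ⊆ R` contains `m'`, which is a unit mod `𝔪`;
* if `𝔣 ⊆ 𝔪` and `𝔪𝔍 = R`, then `𝔣𝔍 ⊆ 𝔣` because `𝔣` is an `𝒪_K`-module inside `𝔪`, so
  `m 𝔍^k ⊆ R` for all `k`; the ascending chain `𝔍^k` in the noetherian module `m⁻¹R` stabilises,
  and cancelling gives `𝔍 = R`, i.e. `𝔪 = R`.

If `p ∣ m`, Cauchy's theorem gives `x ∈ 𝒪_K \ R` with `px ∈ R`, so `𝔣 + pR ≠ R` (from `1 = c + rp`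
we would get `x = cx + r(px) ∈ R`), and any maximal ideal above `𝔣 + pR` is not invertible.
Conversely a prime `𝔭 ∋ p` is maximal, as `R` is integral over `ℤ`, and if it is not invertible
then `m ∈ 𝔣 ⊆ 𝔭`, so `p ∣ m`.
-/

open IsLocalization Submodule NumberField

namespace Submodule

variable {A M : Type*} [CommRing A] [Ring M] [Algebra A M]

theorem eq_one_of_isUnit_of_pow_le [IsNoetherianRing A] {Q B : Submodule A M} (hB : B.FG)
    (hQ : IsUnit Q) (hQ1 : 1 ≤ Q) (hle : ∀ k, Q ^ k ≤ B) : Q = 1 := by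
  have := isNoetherian_of_fg_of_noetherian B hB
  let f : ℕ →o Submodule A B :=
    ⟨fun k => (Q ^ k).comap B.subtype, fun i j hij => comap_mono (pow_le_pow_right' hQ1 hij)⟩
  have hf : ∀ k, (f k).map B.subtype = Q ^ k := fun k => by
    rw [← inf_eq_right.mpr (hle k), ← map_comap_subtype]; rfl
  obtain ⟨n, hn⟩ := monotone_stabilizes_iff_noetherian.mpr ‹_› f
  refine (hQ.pow n).mul_left_cancel ?_
  rw [← pow_succ, mul_one, ← hf, ← hf, hn (n + 1) n.le_succ]

theorem mul_ne_one_of_one_div_le {K : Type*} [Field K] [Algebra A K] [IsNoetherianRing A]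
    {P C J : Submodule A K} (hC : C * C ≤ C) (hP1 : P ≤ 1) (hP : P ≠ 1) (hCP : 1 / C ≤ P)
    (hC0 : 1 / C ≠ ⊥) : P * J ≠ 1 := by
  intro hPJ
  set F := 1 / C
  obtain ⟨c, hcF, hc0⟩ := exists_mem_ne_zero_of_ne_bot hC0
  have hFC : F * C ≤ F := le_div_iff_mul_le.mpr <| by
    rw [mul_assoc]; exact (mul_le_mul_right hC F).trans (le_div_iff_mul_le.mp le_rfl)
  have hFJ : F * J ≤ F := le_div_iff_mul_le.mpr <| by
    rw [mul_right_comm, ← hPJ]; exact mul_le_mul_left (hFC.trans hCP) J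
  have hFJk : ∀ k, F * J ^ k ≤ F := fun k => by
    induction k with
    | zero => rw [pow_zero, mul_one]
    | succ k ih => rw [pow_succ, ← mul_assoc]; exact (mul_le_mul_left ih J).trans hFJ
  have hc : span A {c⁻¹} * span A {c} = 1 := by
    rw [span_mul_span, Set.singleton_mul_singleton, inv_mul_cancel₀ hc0, ← one_eq_span]
  have hJk : ∀ k, J ^ k ≤ span A {c⁻¹} := fun k => calc
    J ^ k = span A {c⁻¹} * (span A {c} * J ^ k) := by rw [← mul_assoc, hc, one_mul]
    _ ≤ span A {c⁻¹} * 1 := mul_le_mul_right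
        ((mul_le_mul_left ((span_singleton_le_iff_mem _ _).mpr hcF) _).trans
          ((hFJk k).trans (hCP.trans hP1))) _
    _ = span A {c⁻¹} := mul_one _
  have h1J : 1 ≤ J := by simpa [hPJ] using mul_le_mul_left hP1 J
  have hJ : J = 1 := eq_one_of_isUnit_of_pow_le (fg_span_singleton _)
    (IsUnit.of_mul_eq_one_right P hPJ) h1J hJk
  exact hP (by simpa [hJ] using hPJ)

end Submodule

section CommRing

variable {A K : Type*} [CommRing A] [CommRing K] [Algebra A K]

theorem IsLocalization.coeSubmodule_le_one (I : Ideal A) : coeSubmodule K I ≤ 1 :=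
  (coeSubmodule_mono K le_top).trans_eq (coeSubmodule_top K)

theorem IsLocalization.coeSubmodule_colon_eq_one_div {C : Submodule A K} (h1C : 1 ≤ C) :
    coeSubmodule K ((1 : Submodule A K).colon C) = 1 / C := by
  ext x
  simp only [mem_coeSubmodule, mem_div_iff_forall_mul_mem, mem_colon, SetLike.mem_coe]
  constructor
  · rintro ⟨a, ha, rfl⟩ y hy
    simpa [Algebra.smul_def] using ha y hy
  · intro hx
    obtain ⟨a, rfl⟩ := mem_one.mp (by simpa using hx 1 (one_le.mp h1C))
    exact ⟨a, fun y hy => by simpa [Algebra.smul_def] using hx y hy, rfl⟩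

theorem colon_sup_span_singleton_ne_top {C : Submodule A K} {x : K} (hxC : x ∈ C)
    (hx : x ∉ (1 : Submodule A K)) {a : A} (hax : a • x ∈ (1 : Submodule A K)) :
    (1 : Submodule A K).colon C ⊔ Ideal.span {a} ≠ ⊤ := by
  intro htop
  obtain ⟨c, hc, _, hr, hcr⟩ := Submodule.mem_sup.mp (htop ▸ Submodule.mem_top (x := (1 : A)))
  obtain ⟨r, rfl⟩ := Ideal.mem_span_singleton'.mp hr
  refine hx ?_
  have : x = c • x + r • a • x := by rw [smul_smul, ← add_smul, hcr, one_smul]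
  rw [this]
  exact add_mem (mem_colon.mp hc x hxC) (Submodule.smul_mem _ r hax)

theorem IsLocalization.coeSubmodule_mul_sup_one_eq_one {𝔭 : Ideal A} (h𝔭 : 𝔭.IsMaximal) {m : A}
    (hm : m ∉ 𝔭) {N : Submodule A K} (hN : coeSubmodule K 𝔭 * N ≤ 1)
    (hmN : algebraMap A K m ∈ coeSubmodule K 𝔭 * N) : coeSubmodule K 𝔭 * (N ⊔ 1) = 1 := by
  rw [Submodule.mul_sup, mul_one]
  refine le_antisymm (sup_le hN (coeSubmodule_le_one 𝔭)) (one_le.mpr ?_)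
  obtain ⟨y, i, hi, hyi⟩ := h𝔭.exists_inv hm
  rw [← map_one (algebraMap A K), ← hyi, map_add, map_mul, ← Algebra.smul_def]
  exact add_mem (mem_sup_left (smul_mem _ y hmN)) (mem_sup_right ⟨i, hi, rfl⟩)

end CommRing

section Tower

variable {A S K : Type*} [CommRing A] [CommRing S] [Field K] [Algebra A S] [Algebra S K]
  [Algebra A K] [IsScalarTower A S K]

theorem IsLocalization.restrictScalars_coeSubmodule_map (𝔭 : Ideal A) :
    (coeSubmodule K (𝔭.map (algebraMap A S))).restrictScalars A =
      coeSubmodule K 𝔭 * (1 : Submodule S K).restrictScalars A := by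
  have hspan : coeSubmodule K (𝔭.map (algebraMap A S)) = span S (algebraMap A K '' 𝔭) := by
    simp only [Ideal.map, coeSubmodule_span, Set.image_image, ← IsScalarTower.algebraMap_apply]
  refine le_antisymm ?_ (mul_le.mpr ?_)
  · rw [hspan, ← span_smul_of_span_eq_top (R := A) (span_univ (R := A) (M := S)), span_le]
    rintro _ ⟨s, -, _, ⟨a, ha, rfl⟩, rfl⟩
    change s • algebraMap A K a ∈ _
    rw [Algebra.smul_def, mul_comm (algebraMap S K s)]
    exact mul_mem_mul ⟨a, ha, rfl⟩ (mem_one.mpr ⟨s, rfl⟩)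
  · rintro _ ⟨a, ha, rfl⟩ _ ⟨s, rfl⟩
    refine ⟨algebraMap A S a * s, Ideal.mul_mem_right _ _ (Ideal.mem_map_of_mem _ ha), ?_⟩
    simp [← IsScalarTower.algebraMap_apply, Algebra.smul_def, mul_comm]

theorem IsLocalization.exists_coeSubmodule_mul_eq_restrictScalars_one [IsDedekindDomain S]
    [IsFractionRing S K] {𝔭 : Ideal A} (h𝔭 : 𝔭.map (algebraMap A S) ≠ ⊥) :
    ∃ N : Submodule A K, coeSubmodule K 𝔭 * N = (1 : Submodule S K).restrictScalars A := by
  set I : FractionalIdeal (nonZeroDivisors S) K := ↑(𝔭.map (algebraMap A S))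
  set J : Submodule S K := ↑I⁻¹
  have hIJ : coeSubmodule K (𝔭.map (algebraMap A S)) * J = 1 := by
    rw [← FractionalIdeal.coe_coeIdeal, ← FractionalIdeal.coe_mul,
      mul_inv_cancel₀ (FractionalIdeal.coeIdeal_ne_zero.mpr h𝔭), FractionalIdeal.coe_one]
  refine ⟨J.restrictScalars A, ?_⟩
  calc coeSubmodule K 𝔭 * J.restrictScalars A
      = coeSubmodule K 𝔭 * (1 * J).restrictScalars A := by rw [one_mul]
    _ = (coeSubmodule K (𝔭.map (algebraMap A S)) * J).restrictScalars A := by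
      rw [restrictScalars_mul, restrictScalars_mul, restrictScalars_coeSubmodule_map, mul_assoc]
    _ = (1 : Submodule S K).restrictScalars A := by rw [hIJ]

variable [FaithfulSMul A K]

theorem not_exists_coeSubmodule_mul_eq_one_of_colon_le [IsNoetherianRing A] {𝔪 : Ideal A}
    (h𝔪 : 𝔪 ≠ ⊤) (hle : (1 : Submodule A K).colon ((1 : Submodule S K).restrictScalars A) ≤ 𝔪)
    (hne : (1 : Submodule A K).colon ((1 : Submodule S K).restrictScalars A) ≠ ⊥) :
    ¬ ∃ J, coeSubmodule K 𝔪 * J = 1 := by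
  have hinj : Function.Injective (coeSubmodule K : Ideal A → Submodule A K) :=
    map_injective_of_injective (FaithfulSMul.algebraMap_injective A K)
  have h1C : 1 ≤ (1 : Submodule S K).restrictScalars A :=
    one_le.mpr (one_le.mp le_rfl : (1 : K) ∈ (1 : Submodule S K))
  rintro ⟨J, hJ⟩
  refine mul_ne_one_of_one_div_le (C := (1 : Submodule S K).restrictScalars A) ?_
    (coeSubmodule_le_one 𝔪) ?_ ?_ ?_ hJ
  · rw [← restrictScalars_mul, one_mul]
  · rw [← coeSubmodule_top K]; exact hinj.ne h𝔪
  · rw [← coeSubmodule_colon_eq_one_div h1C]; exact coeSubmodule_mono K hle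
  · rw [← coeSubmodule_colon_eq_one_div h1C, ← coeSubmodule_bot K]; exact hinj.ne hne

theorem exists_coeSubmodule_mul_eq_one_of_not_colon_le [IsDedekindDomain S] [IsFractionRing S K]
    {𝔭 : Ideal A} (h𝔭 : 𝔭.IsMaximal) (h𝔭0 : 𝔭 ≠ ⊥)
    (hcol : ¬ (1 : Submodule A K).colon ((1 : Submodule S K).restrictScalars A) ≤ 𝔭) :
    ∃ J, coeSubmodule K 𝔭 * J = 1 := by
  obtain ⟨m, hm, hm𝔭⟩ := SetLike.not_le_iff_exists.mp hcol
  have hinj : Function.Injective (algebraMap A S) := by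
    refine .of_comp (f := algebraMap S K) ?_
    rw [← RingHom.coe_comp, ← IsScalarTower.algebraMap_eq]
    exact FaithfulSMul.algebraMap_injective A K
  obtain ⟨N, hN⟩ := exists_coeSubmodule_mul_eq_restrictScalars_one (K := K)
    ((Ideal.map_eq_bot_iff_of_injective hinj).not.mpr h𝔭0)
  refine ⟨_, coeSubmodule_mul_sup_one_eq_one h𝔭 hm𝔭 (N := span A {algebraMap A K m} * N) ?_ ?_⟩
  · rw [mul_left_comm, hN]
    intro x hx
    obtain ⟨y, hy, rfl⟩ := mem_span_singleton_mul.mp hx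
    rw [← Algebra.smul_def]
    exact mem_colon.mp hm y hy
  · rw [mul_left_comm, hN]
    exact mem_span_singleton_mul.mpr
      ⟨1, (one_le.mp le_rfl : (1 : K) ∈ (1 : Submodule S K)), mul_one _⟩

end Tower

theorem AddSubgroup.exists_notMem_nsmul_mem_of_prime_dvd_index {G : Type*} [AddGroup G]
    {H : AddSubgroup G} [H.Normal] (hH : H.index ≠ 0) {p : ℕ} (hp : p.Prime)
    (hdvd : p ∣ H.index) : ∃ x, x ∉ H ∧ p • x ∈ H := by
  have : H.FiniteIndex := ⟨hH⟩
  have : Fact p.Prime := ⟨hp⟩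
  obtain ⟨g, hg⟩ := exists_prime_addOrderOf_dvd_card' p hdvd
  obtain ⟨x, rfl⟩ := QuotientAddGroup.mk_surjective g
  refine ⟨x, fun hx => hp.ne_one ?_, ?_⟩
  · rwa [(QuotientAddGroup.eq_zero_iff x).mpr hx, addOrderOf_zero, eq_comm] at hg
  · rw [← QuotientAddGroup.eq_zero_iff, QuotientAddGroup.mk_nsmul, ← hg, addOrderOf_nsmul_eq_zero]

namespace Ideal

variable {A : Type*} [CommRing A] {𝔭 : Ideal A} [𝔭.IsPrime] {p : ℕ}

theorem comap_intCast_eq_span_of_natCast_mem (hp : p.Prime) (hp𝔭 : (p : A) ∈ 𝔭) :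
    𝔭.comap (algebraMap ℤ A) = span {(p : ℤ)} := by
  have : Fact p.Prime := ⟨hp⟩
  refine ((Int.ideal_span_isMaximal_of_prime p).eq_of_le (IsPrime.comap _).ne_top ?_).symm
  simpa [span_le] using hp𝔭

theorem natCast_mem_iff_dvd_of_natCast_mem (hp : p.Prime) (hp𝔭 : (p : A) ∈ 𝔭) (n : ℕ) :
    (n : A) ∈ 𝔭 ↔ p ∣ n := by
  rw [← Int.natCast_dvd_natCast, ← mem_span_singleton,
    ← comap_intCast_eq_span_of_natCast_mem hp hp𝔭, mem_comap, map_natCast]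

theorem isMaximal_of_natCast_mem [Algebra.IsIntegral ℤ A] (hp : p.Prime) (hp𝔭 : (p : A) ∈ 𝔭) :
    𝔭.IsMaximal := by
  have : Fact p.Prime := ⟨hp⟩
  refine isMaximal_of_isIntegral_of_isMaximal_comap (R := ℤ) 𝔭 ?_
  rw [comap_intCast_eq_span_of_natCast_mem hp hp𝔭]
  exact Int.ideal_span_isMaximal_of_prime p

end Ideal

namespace Subring

variable {K : Type*} [Field K] (R : Subring K)

theorem le_integralClosure_of_finite [Module.Finite ℤ R] :
    R ≤ (integralClosure ℤ K).toSubring := fun x hx =>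
  (Algebra.IsIntegral.isIntegral (R := ℤ) (⟨x, hx⟩ : R)).algebraMap (B := K)

theorem mem_one_submodule_iff {x : K} : x ∈ (1 : Submodule R K) ↔ x ∈ R :=
  ⟨fun h => by obtain ⟨r, rfl⟩ := mem_one.mp h; exact r.2, fun hx => mem_one.mpr ⟨⟨x, hx⟩, rfl⟩⟩

theorem span_val_image_eq_coeSubmodule (I : Ideal R) :
    span R (Subtype.val '' (I : Set R)) = coeSubmodule K I := by
  conv_rhs => rw [← Ideal.span_eq I]
  rw [coeSubmodule_span]
  rfl

theorem index_addSubgroupOf_integralClosure_ne_zero [NumberField K]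
    (hfree : Nonempty (Module.Basis (Fin (Module.finrank ℚ K)) ℤ R))
    (hRO : R ≤ (integralClosure ℤ K).toSubring) :
    (R.toAddSubgroup.addSubgroupOf (integralClosure ℤ K).toSubring.toAddSubgroup).index ≠ 0 := by
  set O := (integralClosure ℤ K).toSubring.toAddSubgroup
  set H := R.toAddSubgroup.addSubgroupOf O
  have : Module.Free ℤ O := inferInstanceAs (Module.Free ℤ (𝓞 K))
  have : Module.Finite ℤ O := inferInstanceAs (Module.Finite ℤ (𝓞 K))
  have hrank : Module.finrank ℤ H.toIntSubmodule = Module.finrank ℤ O := calc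
    _ = Module.finrank ℤ R :=
      LinearEquiv.finrank_eq (AddSubgroup.addSubgroupOfEquivOfLe (G := K) hRO).toIntLinearEquiv
    _ = Module.finrank ℚ K := by rw [Module.finrank_eq_card_basis hfree.some, Fintype.card_fin]
    _ = Module.finrank ℤ (𝓞 K) := (RingOfIntegers.rank K).symm
  have := Submodule.finiteQuotientOfFreeOfRankEq _ hrank
  exact @AddSubgroup.index_ne_zero_of_finite _ _ H this

variable [Algebra R (𝓞 K)] [IsScalarTower R (𝓞 K) K]

theorem mem_restrictScalars_one_iff {x : K} :
    x ∈ (1 : Submodule (𝓞 K) K).restrictScalars R ↔ x ∈ integralClosure ℤ K :=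
  ⟨fun h => by obtain ⟨o, rfl⟩ := mem_one.mp h; exact o.2, fun hx => mem_one.mpr ⟨⟨x, hx⟩, rfl⟩⟩

theorem natCast_index_mem_colon :
    ((R.toAddSubgroup.addSubgroupOf (integralClosure ℤ K).toSubring.toAddSubgroup).index : R) ∈
      (1 : Submodule R K).colon ((1 : Submodule (𝓞 K) K).restrictScalars R) := by
  refine mem_colon.mpr fun y hy => ?_
  rw [SetLike.mem_coe, mem_restrictScalars_one_iff] at hy
  rw [mem_one_submodule_iff, Algebra.smul_def, map_natCast]
  simpa [nsmul_eq_mul, AddSubgroup.mem_addSubgroupOf] using AddSubgroup.nsmul_index_mem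
    (R.toAddSubgroup.addSubgroupOf (integralClosure ℤ K).toSubring.toAddSubgroup) ⟨y, hy⟩

theorem colon_sup_span_natCast_ne_top_of_prime_dvd_index {p : ℕ} (hp : p.Prime)
    (hH : (R.toAddSubgroup.addSubgroupOf (integralClosure ℤ K).toSubring.toAddSubgroup).index ≠ 0)
    (hdvd :
      p ∣ (R.toAddSubgroup.addSubgroupOf (integralClosure ℤ K).toSubring.toAddSubgroup).index) :
    (1 : Submodule R K).colon ((1 : Submodule (𝓞 K) K).restrictScalars R) ⊔
      Ideal.span {(p : R)} ≠ ⊤ := by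
  obtain ⟨⟨x, hxO⟩, hxR, hpx⟩ :=
    AddSubgroup.exists_notMem_nsmul_mem_of_prime_dvd_index hH hp hdvd
  refine colon_sup_span_singleton_ne_top ((mem_restrictScalars_one_iff R).mpr hxO)
    ((mem_one_submodule_iff R).not.mpr hxR) ?_
  rw [mem_one_submodule_iff, Algebra.smul_def, map_natCast]
  simpa [nsmul_eq_mul, AddSubgroup.mem_addSubgroupOf] using hpx

end Subring

/-- Let `R` be a full-rank order in a number field `K` (a subring that is free of
rank `[K:ℚ]` as a `ℤ`-module) and `p` a prime number. Then `p` divides the index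
`#(𝒪_K/R)` of `R` in the maximal order `𝒪_K` (the integral closure of `ℤ` in `K`)
iff `R` has a non-invertible prime ideal containing `p`: a prime ideal `𝔭` of `R`
with `p ∈ 𝔭` such that there is no `R`-submodule `J` of `K` with `𝔭J = R`. -/
theorem stmt_17 {K : Type*} [Field K] [NumberField K] (R : Subring K)
    (hfree : Nonempty (Module.Basis (Fin (Module.finrank ℚ K)) ℤ ↥R))
    (p : ℕ) (hp : p.Prime) :
    p ∣ Nat.card
        (↥(integralClosure ℤ K).toSubring.toAddSubgroup ⧸
          R.toAddSubgroup.addSubgroupOf (integralClosure ℤ K).toSubring.toAddSubgroup) ↔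
      ∃ 𝔭 : Ideal ↥R, 𝔭.IsPrime ∧ (p : ↥R) ∈ 𝔭 ∧
        ¬ ∃ J : Submodule ↥R K,
            Submodule.span ↥R (Subtype.val '' (𝔭 : Set ↥R)) * J = 1 := by
  have : Module.Finite ℤ R := .of_basis hfree.some
  have : IsNoetherianRing R := .of_finite ℤ R
  have hRO := R.le_integralClosure_of_finite
  let : Algebra R (𝓞 K) := (Subring.inclusion hRO).toAlgebra
  have : IsScalarTower R (𝓞 K) K := .of_algebraMap_eq fun _ => rfl
  have hH := R.index_addSubgroupOf_integralClosure_ne_zero hfree hRO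
  have hcol := R.natCast_index_mem_colon
  change p ∣ AddSubgroup.index _ ↔ _
  simp_rw [Subring.span_val_image_eq_coeSubmodule]
  constructor
  · intro hdvd
    obtain ⟨𝔪, h𝔪, hle⟩ :=
      Ideal.exists_le_maximal _ (R.colon_sup_span_natCast_ne_top_of_prime_dvd_index hp hH hdvd)
    refine ⟨𝔪, h𝔪.isPrime, hle (Ideal.mem_sup_right (Ideal.mem_span_singleton_self _)), ?_⟩
    exact not_exists_coeSubmodule_mul_eq_one_of_colon_le (S := 𝓞 K) h𝔪.ne_top
      (le_sup_left.trans hle) ((Submodule.ne_bot_iff _).mpr ⟨_, hcol, Nat.cast_ne_zero.mpr hH⟩)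
  · rintro ⟨𝔭, h𝔭, hp𝔭, hninv⟩
    by_contra hndvd
    refine hninv (exists_coeSubmodule_mul_eq_one_of_not_colon_le (S := 𝓞 K)
      (Ideal.isMaximal_of_natCast_mem hp hp𝔭)
      ((Submodule.ne_bot_iff _).mpr ⟨_, hp𝔭, Nat.cast_ne_zero.mpr hp.ne_zero⟩) fun hle => ?_)
    exact hndvd ((Ideal.natCast_mem_iff_dvd_of_natCast_mem hp hp𝔭 _).mp (hle hcol))
end

section
/- Let B be a finite abelian group with an automorphism β, and suppose 0 → A →^f B →^g C → 0 is an exact sequence of finite abelian groups such that β restricts along f to an automorphism α of A (i.e. β(f(A)) = f(A) and β∘f = f∘α). Then β induces an automorphism γ of C with γ∘g = g∘β, and if #C is odd then (β, B) = (α, A)·(γ, C)^{#A}. -/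
/-!
Choosing a set-theoretic section `s` of `g` identifies `B` with `C × A` via `(c, a) ↦ s c + f a`.
In these coordinates `β` becomes `(c, a) ↦ (γ c, t c + α a)` with `f (t c) = β (s c) - s (γ c)`,
so `sign β = sign γ ^ #A · sign α ^ #C · sign (· + ∑ t)`. The last factor is a translation of `A`;
its `#C`-th power is the sign of translation of `B` by `f (∑ t) = β S - S`, `S = ∑ s`, which is `1`
because conjugating by `β` does not change signs. For `#C` odd the `#C`-th powers can be dropped.
-/

open Equiv Function

lemma Int.units_pow_of_odd (u : ℤˣ) {n : ℕ} (hn : Odd n) : u ^ n = u := by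
  rw [Int.units_pow_eq_pow_mod_two, Nat.odd_iff.mp hn, pow_one]

section Translations

variable {G : Type*} [AddCommGroup G] [Fintype G] [DecidableEq G]

lemma Equiv.Perm.sign_addLeft_sum {ι : Type*} (s : Finset ι) (t : ι → G) :
    Perm.sign (Equiv.addLeft (∑ i ∈ s, t i)) = ∏ i ∈ s, Perm.sign (Equiv.addLeft (t i)) := by
  classical
  induction s using Finset.induction with
  | empty => simp
  | insert _ _ h ih =>
    rw [Finset.sum_insert h, Equiv.addLeft_add, map_mul, ih, Finset.prod_insert h]

lemma Equiv.Perm.sign_addLeft_addEquiv_apply (e : G ≃+ G) (x : G) :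
    Perm.sign (Equiv.addLeft (e x)) = Perm.sign (Equiv.addLeft x) := by
  have : Equiv.addLeft (e x) = e.toEquiv.permCongr (Equiv.addLeft x) := by
    ext y
    change e x + y = e (x + e.symm y)
    rw [map_add, AddEquiv.apply_symm_apply]
  rw [this, Perm.sign_permCongr]

lemma Equiv.Perm.sign_addLeft_addEquiv_apply_sub_self (e : G ≃+ G) (x : G) :
    Perm.sign (Equiv.addLeft (e x - x)) = 1 := by
  rw [sub_eq_add_neg, Equiv.addLeft_add, map_mul, sign_addLeft_addEquiv_apply,
    ← map_mul, ← Equiv.addLeft_add, add_neg_cancel, Equiv.addLeft_zero, map_one]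

end Translations

section InducedAutomorphism

variable {B C F : Type*} [AddCommGroup B] [AddCommGroup C] [FunLike F B B]
  [AddMonoidHomClass F B B] (g : B →+ C)

noncomputable def AddMonoidHom.inducedHom (hg : Surjective g) (φ : F)
    (hφ : ∀ b, g b = 0 → g (φ b) = 0) : C →+ C :=
  g.liftOfSurjective hg ⟨g.comp φ, fun b hb => hφ b hb⟩

lemma AddMonoidHom.inducedHom_apply (hg : Surjective g) (φ : F)
    (hφ : ∀ b, g b = 0 → g (φ b) = 0) (b : B) :
    g.inducedHom hg φ hφ (g b) = g (φ b) :=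
  g.liftOfRightInverse_comp_apply _ _ _ b

noncomputable def AddMonoidHom.inducedAddEquiv (hg : Surjective g) (β : B ≃+ B)
    (hβ : ∀ b, g (β b) = 0 ↔ g b = 0) : C ≃+ C where
  toFun := g.inducedHom hg β fun b => (hβ b).2
  invFun := g.inducedHom hg β.symm fun b hb => by rwa [← hβ, AddEquiv.apply_symm_apply]
  left_inv c := by
    obtain ⟨b, rfl⟩ := hg c
    rw [inducedHom_apply, inducedHom_apply, AddEquiv.symm_apply_apply]
  right_inv c := by
    obtain ⟨b, rfl⟩ := hg c
    rw [inducedHom_apply, inducedHom_apply, AddEquiv.apply_symm_apply]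
  map_add' := map_add _

lemma AddMonoidHom.inducedAddEquiv_apply (hg : Surjective g) (β : B ≃+ B)
    (hβ : ∀ b, g (β b) = 0 ↔ g b = 0) (b : B) :
    g.inducedAddEquiv hg β hβ (g b) = g (β b) :=
  g.inducedHom_apply hg β (fun b => (hβ b).2) b

end InducedAutomorphism

lemma map_sum_eq_sub_of_section {A B C : Type*} [AddCommGroup A] [AddCommGroup B] [Fintype C]
    {f : A →+ B} (β : B ≃+ B) (s : C → B) (γ : Perm C)
    {t : C → A} (ht : ∀ c, f (t c) = β (s c) - s (γ c)) :
    f (∑ c, t c) = β (∑ c, s c) - ∑ c, s c := by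
  simp only [map_sum, ht, Finset.sum_sub_distrib, Equiv.sum_comp γ s]

section ShortExact

variable {A B C : Type*} [AddCommGroup A] [AddCommGroup B] [AddCommGroup C]
  {f : A →+ B} {g : B →+ C}

lemma map_apply_eq_zero_iff_of_exact (hexact : ∀ b, g b = 0 ↔ b ∈ Set.range f)
    {β : B ≃+ B} {α : A → A} (hα : Surjective α) (hcomm : ∀ a, β (f a) = f (α a)) (b : B) :
    g (β b) = 0 ↔ g b = 0 := by
  rw [hexact, hexact]
  constructor
  · rintro ⟨a', ha'⟩
    obtain ⟨a, rfl⟩ := hα a'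
    exact ⟨a, β.injective (by rw [hcomm, ha'])⟩
  · rintro ⟨a, rfl⟩
    exact ⟨α a, (hcomm a).symm⟩

noncomputable def sectionEquiv (hf : Injective f) (hexact : ∀ b, g b = 0 ↔ b ∈ Set.range f)
    (s : C → B) (hs : ∀ c, g (s c) = c) : C × A ≃ B :=
  have hgf : ∀ a, g (f a) = 0 := fun a => (hexact (f a)).2 ⟨a, rfl⟩
  Equiv.ofBijective (fun p => s p.1 + f p.2) <| by
    refine ⟨fun ⟨c, a⟩ ⟨c', a'⟩ h => ?_, fun b => ?_⟩
    · have hc : c = c' := by simpa [hs, hgf] using congrArg g h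
      subst hc
      exact Prod.ext rfl (hf (add_left_cancel h))
    · obtain ⟨a, ha⟩ := (hexact (b - s (g b))).1 (by rw [map_sub, hs, sub_self])
      exact ⟨(g b, a), by simp [ha]⟩

variable (hf : Injective f) (hexact : ∀ b, g b = 0 ↔ b ∈ Set.range f)
  (s : C → B) (hs : ∀ c, g (s c) = c)

lemma sectionEquiv_apply (c : C) (a : A) :
    sectionEquiv hf hexact s hs (c, a) = s c + f a :=
  rfl

lemma permCongr_sectionEquiv_symm {β : B ≃+ B} {α : Perm A} (hcomm : ∀ a, β (f a) = f (α a))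
    (γ : Perm C) {t : C → A} (ht : ∀ c, f (t c) = β (s c) - s (γ c)) :
    (sectionEquiv hf hexact s hs).symm.permCongr β.toEquiv =
      Equiv.prodCongrLeft (fun _ => γ) *
        Equiv.prodCongrRight (fun c => α.trans (Equiv.addLeft (t c))) := by
  ext ⟨c, a⟩ : 1
  change (sectionEquiv hf hexact s hs).symm (β (sectionEquiv hf hexact s hs (c, a))) =
    (γ c, t c + α a)
  rw [Equiv.symm_apply_eq, sectionEquiv_apply, sectionEquiv_apply, map_add, hcomm, map_add, ht]
  abel

variable [Fintype A] [Fintype B] [Fintype C] [DecidableEq A] [DecidableEq B] [DecidableEq C]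

include hf hexact hs in
lemma sign_addLeft_map_eq_pow_card (x : A) :
    Perm.sign (Equiv.addLeft (f x)) = Perm.sign (Equiv.addLeft x) ^ Fintype.card C := by
  have : (sectionEquiv hf hexact s hs).symm.permCongr (Equiv.addLeft (f x)) =
      Equiv.prodCongrRight (fun _ : C => Equiv.addLeft x) := by
    ext ⟨c, a⟩ : 1
    change (sectionEquiv hf hexact s hs).symm (f x + sectionEquiv hf hexact s hs (c, a)) =
      (c, x + a)
    rw [Equiv.symm_apply_eq, sectionEquiv_apply, sectionEquiv_apply, map_add]
    abel
  rw [← Perm.sign_permCongr (sectionEquiv hf hexact s hs).symm, this,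
    Perm.sign_prodCongrRight, Finset.prod_const, Finset.card_univ]

include hf hexact hs in
lemma sign_eq_of_section {β : B ≃+ B} {α : Perm A} (hcomm : ∀ a, β (f a) = f (α a))
    (γ : Perm C) {t : C → A} (ht : ∀ c, f (t c) = β (s c) - s (γ c)) :
    Perm.sign β.toEquiv = Perm.sign γ ^ Fintype.card A *
      (Perm.sign (Equiv.addLeft (∑ c, t c)) * Perm.sign α ^ Fintype.card C) := by
  rw [← Perm.sign_permCongr (sectionEquiv hf hexact s hs).symm,
    permCongr_sectionEquiv_symm hf hexact s hs hcomm γ ht, map_mul, Perm.sign_prodCongrLeft,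
    Perm.sign_prodCongrRight, Finset.prod_const, Finset.card_univ, Perm.sign_addLeft_sum]
  simp only [Perm.sign_trans, Finset.prod_mul_distrib, Finset.prod_const, Finset.card_univ]

end ShortExact

theorem sign_eq_sign_mul_sign_pow_of_exact {A B C : Type*}
    [AddCommGroup A] [AddCommGroup B] [AddCommGroup C] [Fintype A] [Fintype B] [Fintype C]
    [DecidableEq A] [DecidableEq B] [DecidableEq C] {f : A →+ B} {g : B →+ C}
    (hf : Injective f) (hg : Surjective g) (hexact : ∀ b, g b = 0 ↔ b ∈ Set.range f)
    {β : B ≃+ B} {α : Perm A} (hcomm : ∀ a, β (f a) = f (α a))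
    {γ : Perm C} (hγ : ∀ b, γ (g b) = g (β b)) (hodd : Odd (Fintype.card C)) :
    Perm.sign β.toEquiv = Perm.sign α * Perm.sign γ ^ Fintype.card A := by
  obtain ⟨s, hs⟩ := hg.hasRightInverse
  have hker : ∀ c, g (β (s c) - s (γ c)) = 0 := fun c => by
    rw [map_sub, ← hγ, hs, hs, sub_self]
  choose t ht using fun c => (hexact _).1 (hker c)
  have hT := sign_addLeft_map_eq_pow_card hf hexact s hs (∑ c, t c)
  rw [map_sum_eq_sub_of_section β s γ ht, Perm.sign_addLeft_addEquiv_apply_sub_self,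
    Int.units_pow_of_odd _ hodd] at hT
  rw [sign_eq_of_section hf hexact s hs hcomm γ ht, ← hT, one_mul, Int.units_pow_of_odd _ hodd,
    mul_comm]

/-- Let `B` be a finite abelian group with automorphism `β`, and
`0 → A → B → C → 0` an exact sequence of finite abelian groups such that `β`
restricts along `f` to an automorphism `α` of `A`. Then `β` induces an
automorphism `γ` of `C` with `γ∘g = g∘β`, and if `#C` is odd then
`(β, B) = (α, A)·(γ, C)^{#A}`, signs being taken as permutations of the
underlying finite sets. -/
theorem stmt_18 {A B C : Type*}
    [AddCommGroup A] [AddCommGroup B] [AddCommGroup C]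
    [Fintype A] [Fintype B] [Fintype C]
    [DecidableEq A] [DecidableEq B] [DecidableEq C]
    (f : A →+ B) (g : B →+ C)
    (hf : Function.Injective f) (hg : Function.Surjective g)
    (hexact : ∀ b : B, g b = 0 ↔ b ∈ Set.range f)
    (β : B ≃+ B) (α : A ≃+ A)
    (hcomm : ∀ a : A, β (f a) = f (α a)) :
    ∃ γ : C ≃+ C, (∀ b : B, γ (g b) = g (β b)) ∧
      (Odd (Fintype.card C) →
        Equiv.Perm.sign β.toEquiv =
          Equiv.Perm.sign α.toEquiv * (Equiv.Perm.sign γ.toEquiv) ^ (Fintype.card A)) := by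
  have hβ := map_apply_eq_zero_iff_of_exact hexact α.surjective hcomm
  refine ⟨g.inducedAddEquiv hg β hβ, g.inducedAddEquiv_apply hg β hβ, fun hodd => ?_⟩
  exact sign_eq_sign_mul_sign_pow_of_exact hf hg hexact (α := α.toEquiv) hcomm
    (g.inducedAddEquiv_apply hg β hβ) hodd
end
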